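/- arXiv:math/0509141 — 6 statements merged into one kernel-verified Lean document; each statement's English description precedes it below -/
import Mathlib

section
/- Let (X, F) be a dynamical system where X is a compact metric space and F : X → X is a piecewise contraction with contraction rate a ∈ [0,1) relative to a finite partition P (i.e., d(F(x), F(y)) ≤ a·d(x,y) whenever x and y lie in the same atom of P, and moreover F maps any ball disjoint from the discontinuity set Δ to a ball of radius contracted by factor a). Let Λ be the limit set (the set of accumulation points of orbits), which is F-invariant. If dist(Λ, Δ) > 0, then Λ is finite, and every point of Λ is periodic under F. -/
open Filter

/-- The limit set of `(X, F)`: all accumulation points of orbits. -/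
def limitSet {X : Type*} [MetricSpace X] (F : X → X) : Set X :=
  {x | ∃ y : X, ∃ φ : ℕ → ℕ, StrictMono φ ∧
    Tendsto (fun n => F^[φ n] y) atTop (nhds x)}

set_option maxHeartbeats 1000000 in
/-- Multiperiodicity: let `X` be a compact metric space and `F` a
piecewise contraction of rate `a < 1` relative to a finite partition `P`
(contraction on atoms), which moreover maps any ball disjoint from the discontinuity
set `Δ` onto the ball of radius contracted by `a` around the image of the center.
If the limit set `Λ` (which is `F`-invariant) lies at positive distance from `Δ`,
then `Λ` is finite and every point of `Λ` is periodic under `F`. -/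
theorem stmt_3 {X : Type*} [MetricSpace X] [CompactSpace X]
    (F : X → X) (a : ℝ) (ha0 : 0 ≤ a) (ha1 : a < 1)
    {ι : Type*} (P : ι → Set X) (hPfin : Finite ι)
    (hcover : ∀ x : X, ∃ i, x ∈ P i)
    (hcontr : ∀ i, ∀ x ∈ P i, ∀ y ∈ P i, dist (F x) (F y) ≤ a * dist x y)
    (Δ : Set X)
    (hball : ∀ (x : X) (r : ℝ), 0 < r → Metric.ball x r ∩ Δ = ∅ →
      F '' Metric.ball x r = Metric.ball (F x) (a * r))
    (hinv : F '' limitSet F ⊆ limitSet F)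
    (hdist : ∃ ε > 0, ∀ x ∈ limitSet F, ∀ z ∈ Δ, ε ≤ dist x z) :
    (limitSet F).Finite ∧ ∀ x ∈ limitSet F, ∃ p : ℕ, 1 ≤ p ∧ F^[p] x = x := by
  obtain ⟨ε, hε, hsep⟩ := hdist
  by_cases hne : (limitSet F).Nonempty
  swap
  · rw [Set.not_nonempty_iff_eq_empty] at hne
    rw [hne]
    exact ⟨Set.finite_empty, by simp⟩
  obtain ⟨x₀, hx₀⟩ := hne
  -- balls around points of the limit set avoid Δ
  have hballΔ : ∀ x ∈ limitSet F, ∀ r : ℝ, r ≤ ε → Metric.ball x r ∩ Δ = ∅ := by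
    intro x hx r hr
    rw [Set.eq_empty_iff_forall_notMem]
    rintro z ⟨hz1, hz2⟩
    rw [Metric.mem_ball] at hz1
    have := hsep x hx z hz2
    rw [dist_comm] at hz1
    linarith
  -- a is positive
  have ha : 0 < a := by
    have h1 := hball x₀ ε hε (hballΔ x₀ hx₀ ε le_rfl)
    have h2 : F x₀ ∈ Metric.ball (F x₀) (a * ε) := by
      rw [← h1]
      exact ⟨x₀, Metric.mem_ball_self hε, rfl⟩
    rw [Metric.mem_ball, dist_self] at h2
    nlinarith
  -- Lemma L : local contraction around limit set points
  have hL : ∀ x ∈ limitSet F, ∀ y : X, dist x y < ε →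
      dist (F x) (F y) ≤ a * dist x y := by
    intro x hx y hxy
    have key : ∀ r : ℝ, dist x y < r → r ≤ ε → dist (F x) (F y) < a * r := by
      intro r h1 h2
      have h3 := hball x r (lt_of_le_of_lt dist_nonneg h1) (hballΔ x hx r h2)
      have h4 : F y ∈ Metric.ball (F x) (a * r) := by
        rw [← h3]
        exact ⟨y, by rwa [Metric.mem_ball, dist_comm], rfl⟩
      rwa [Metric.mem_ball, dist_comm] at h4
    by_contra hcon
    push_neg at hcon
    set D := dist (F x) (F y) with hD
    set r := min ε ((dist x y + D / a) / 2) with hr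
    have hda : dist x y < D / a := by
      rw [lt_div_iff₀ ha]; nlinarith
    have h1 : dist x y < r := lt_min hxy (by linarith)
    have h2 : r ≤ ε := min_le_left _ _
    have h3 := key r h1 h2
    have h4 : r ≤ (dist x y + D / a) / 2 := min_le_right _ _
    have h5 : a * r ≤ a * ((dist x y + D / a) / 2) := by nlinarith
    have h6 : a * ((dist x y + D / a) / 2) < D := by
      have : a * (D / a) = D := by field_simp
      nlinarith
    linarith
  -- Iterated local contraction
  have hLn : ∀ n : ℕ, ∀ x ∈ limitSet F, ∀ y : X, dist x y < ε →
      F^[n] x ∈ limitSet F ∧ dist (F^[n] x) (F^[n] y) ≤ a ^ n * dist x y := by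
    intro n
    induction n with
    | zero => intro x hx y hxy; simpa using hx
    | succ n ih =>
      intro x hx y hxy
      obtain ⟨hmem, hd⟩ := ih x hx y hxy
      have hpow : a ^ n ≤ 1 := pow_le_one₀ ha0 ha1.le
      have hlt : dist (F^[n] x) (F^[n] y) < ε := by nlinarith [dist_nonneg (x := x) (y := y)]
      have hstep := hL (F^[n] x) hmem (F^[n] y) hlt
      constructor
      · rw [Function.iterate_succ_apply']
        exact hinv ⟨F^[n] x, hmem, rfl⟩
      · rw [Function.iterate_succ_apply', Function.iterate_succ_apply']
        calc dist (F (F^[n] x)) (F (F^[n] y)) ≤ a * dist (F^[n] x) (F^[n] y) := hstep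
          _ ≤ a * (a ^ n * dist x y) := by nlinarith
          _ = a ^ (n + 1) * dist x y := by ring
  -- Recurrence
  have hrec : ∀ x ∈ limitSet F, ∀ δ : ℝ, 0 < δ → ∀ N : ℕ,
      ∃ t : ℕ, N ≤ t ∧ 1 ≤ t ∧ dist (F^[t] x) x < δ := by
    intro x hx δ hδ N
    obtain ⟨y, φ, hφ, hten⟩ := id hx
    rw [Metric.tendsto_atTop] at hten
    obtain ⟨M₁, hM₁⟩ := hten (min (ε / 2) (δ / 2)) (lt_min (by linarith) (by linarith))
    set u := F^[φ M₁] y with hu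
    have hux : dist u x < min (ε / 2) (δ / 2) := hM₁ M₁ le_rfl
    obtain ⟨N', hN'⟩ := exists_pow_lt_of_lt_one (show (0:ℝ) < δ / (2 * ε) from div_pos hδ (by linarith)) ha1
    obtain ⟨M₂, hM₂⟩ := hten (δ / 2) (by linarith)
    set m := max M₂ (φ M₁ + N + N' + 1) with hm
    have hm1 : M₂ ≤ m := le_max_left _ _
    have hm2 : φ M₁ + N + N' + 1 ≤ m := le_max_right _ _
    have hφm : m ≤ φ m := hφ.le_apply
    set s := φ m - φ M₁ with hs
    have hsφ : φ M₁ ≤ φ m := by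
      have : M₁ ≤ φ M₁ := hφ.le_apply
      exact (hφ.le_iff_le).2 (by omega)
    have hseq : s + φ M₁ = φ m := by omega
    have hsN : N ≤ s ∧ N' ≤ s ∧ 1 ≤ s := by omega
    have hiter : F^[φ m] y = F^[s] u := by
      rw [hu, ← Function.iterate_add_apply, hseq]
    have hxu : dist x u < ε := by
      rw [dist_comm]
      calc dist u x < min (ε / 2) (δ / 2) := hux
        _ ≤ ε / 2 := min_le_left _ _
        _ < ε := by linarith
    have hcontr2 := (hLn s x hx u hxu).2
    have hm3 := hM₂ m hm1
    rw [hiter] at hm3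
    refine ⟨s, hsN.1, hsN.2.2, ?_⟩
    have h1 : dist (F^[s] x) x ≤ dist (F^[s] x) (F^[s] u) + dist (F^[s] u) x :=
      dist_triangle _ _ _
    have h2 : a ^ s ≤ a ^ N' := pow_le_pow_of_le_one ha0 ha1.le hsN.2.1
    have h3 : a ^ s * dist x u ≤ a ^ N' * ε := by
      have h4 : dist x u ≤ ε := hxu.le
      have h5 : (0:ℝ) ≤ a ^ s := pow_nonneg ha0 s
      have h6 : (0:ℝ) ≤ a ^ N' := pow_nonneg ha0 N'
      nlinarith [dist_nonneg (x := x) (y := u)]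
    have h7 : a ^ N' * ε < δ / 2 := by
      rw [lt_div_iff₀ (by positivity)] at hN'
      nlinarith
    linarith
  -- Every point of the limit set is periodic
  have hper : ∀ x ∈ limitSet F, ∃ p : ℕ, 1 ≤ p ∧ F^[p] x = x := by
    intro x hx
    have hδ₀ : 0 < ε * (1 - a) / 2 := by nlinarith
    obtain ⟨t, -, ht1, hd₀⟩ := hrec x hx (ε * (1 - a) / 2) hδ₀ 0
    set d₀ := dist (F^[t] x) x with hd₀def
    have hd₀0 : 0 ≤ d₀ := dist_nonneg
    set c := a ^ t with hc
    have hc1 : c < 1 := pow_lt_one₀ ha0 ha1 (by omega)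
    have hc0 : 0 < c := pow_pos ha t
    have hca : c ≤ a := by
      calc c = a ^ t := rfl
        _ ≤ a ^ 1 := pow_le_pow_of_le_one ha0 ha1.le ht1
        _ = a := pow_one a
    set u : ℕ → X := fun k => F^[t * k] x with huseq
    have hu0 : u 0 = x := by simp [huseq]
    have husucc : ∀ k, u (k + 1) = F^[t] (u k) := by
      intro k
      simp only [huseq]
      rw [show t * (k + 1) = t + t * k by ring, Function.iterate_add_apply]
    -- iterates are in limit set, distances geometric
    have hA : ∀ k, u k ∈ limitSet F ∧ dist (u k) (u (k + 1)) ≤ d₀ * c ^ k := by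
      intro k
      induction k with
      | zero =>
        refine ⟨by rwa [hu0], ?_⟩
        rw [hu0, husucc 0, hu0, dist_comm]
        simp
        exact le_of_eq hd₀def.symm
      | succ k ih =>
        obtain ⟨hmem, hd⟩ := ih
        have hck : c ^ k ≤ 1 := pow_le_one₀ hc0.le hc1.le
        have hlt : dist (u k) (u (k + 1)) < ε := by nlinarith
        have := hLn t (u k) hmem (u (k + 1)) hlt
        refine ⟨by rw [husucc]; exact this.1, ?_⟩
        have hstep : dist (F^[t] (u k)) (F^[t] (u (k+1))) ≤ d₀ * c ^ (k + 1) := by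
          calc dist (F^[t] (u k)) (F^[t] (u (k+1))) ≤ a ^ t * dist (u k) (u (k+1)) := this.2
            _ ≤ c * (d₀ * c ^ k) := by rw [← hc]; nlinarith
            _ = d₀ * c ^ (k + 1) := by ring
        rw [husucc (k + 1), husucc k]
        rw [husucc k] at hstep
        exact hstep
    have hcauchy : CauchySeq u := cauchySeq_of_le_geometric c d₀ hc1 (fun k => (hA k).2)
    obtain ⟨z, hz⟩ := cauchySeq_tendsto_of_complete hcauchy
    have hdistz : ∀ k, dist (u k) z ≤ d₀ * c ^ k / (1 - c) :=
      dist_le_of_le_geometric_of_tendsto c d₀ hc1 (fun k => (hA k).2) hz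
    have hd₀ε : d₀ / (1 - c) < ε / 2 := by
      rw [div_lt_iff₀ (by linarith)]
      nlinarith
    have hdistz' : ∀ k, dist (u k) z < ε / 2 := by
      intro k
      have h1 := hdistz k
      have h2 : c ^ k ≤ 1 := pow_le_one₀ hc0.le hc1.le
      have h3 : d₀ * c ^ k / (1 - c) ≤ d₀ / (1 - c) := by
        apply div_le_div_of_nonneg_right ?_ (by linarith) |>.trans_eq rfl
        nlinarith
      linarith
    have hzΛ : z ∈ limitSet F :=
      ⟨x, fun k => t * k, fun i j hij =>
        mul_lt_mul_of_pos_left hij (show 0 < t by omega), hz⟩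
    -- z is fixed by F^[t]
    have hzfix : F^[t] z = z := by
      have hbound : ∀ k, dist (F^[t] z) z ≤ (c * (d₀ / (1 - c)) + d₀ * c / (1 - c)) * c ^ k := by
        intro k
        have hmem := (hA k).1
        have hlt : dist (u k) z < ε := by linarith [hdistz' k]
        have h1 := (hLn t (u k) hmem z hlt).2
        have h2 : dist (F^[t] z) z ≤ dist (F^[t] (u k)) (F^[t] z) + dist (u (k + 1)) z := by
          rw [husucc] at *
          calc dist (F^[t] z) z ≤ dist (F^[t] z) (F^[t] (u k)) + dist (F^[t] (u k)) z :=
                dist_triangle _ _ _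
            _ = dist (F^[t] (u k)) (F^[t] z) + dist (F^[t] (u k)) z := by rw [dist_comm]
        have h3 := hdistz (k + 1)
        have h4 := hdistz k
        have h5 : a ^ t * dist (u k) z ≤ c * (d₀ * c ^ k / (1 - c)) := by
          rw [← hc]; nlinarith [dist_nonneg (x := u k) (y := z)]
        calc dist (F^[t] z) z ≤ dist (F^[t] (u k)) (F^[t] z) + dist (u (k + 1)) z := h2
          _ ≤ c * (d₀ * c ^ k / (1 - c)) + d₀ * c ^ (k + 1) / (1 - c) := by
              refine add_le_add (le_trans h1 h5) h3
          _ = (c * (d₀ / (1 - c)) + d₀ * c / (1 - c)) * c ^ k := by ring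
      have htend : Tendsto (fun k => (c * (d₀ / (1 - c)) + d₀ * c / (1 - c)) * c ^ k)
          atTop (nhds 0) := by
        have := (tendsto_pow_atTop_nhds_zero_of_lt_one hc0.le hc1).const_mul
          (c * (d₀ / (1 - c)) + d₀ * c / (1 - c))
        simpa using this
      have : dist (F^[t] z) z ≤ 0 := ge_of_tendsto' htend hbound
      have := le_antisymm this dist_nonneg
      exact eq_of_dist_eq_zero this
    have hxz : dist x z < ε := by
      have := hdistz' 0
      rw [hu0] at this
      linarith
    by_cases hx2 : ∃ s : ℕ, F^[s] z = x
    · obtain ⟨s, hs⟩ := hx2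
      refine ⟨t, ht1, ?_⟩
      rw [← hs, ← Function.iterate_add_apply, Nat.add_comm, Function.iterate_add_apply,
        hzfix, hs]
    · exfalso
      push_neg at hx2
      obtain ⟨s₀, hs₀mem, hs₀min⟩ := Finset.exists_min_image (Finset.range t)
        (fun s => dist x (F^[s] z)) ⟨0, Finset.mem_range.2 (by omega)⟩
      set μ := dist x (F^[s₀] z) with hμ
      have hμpos : 0 < μ := dist_pos.2 fun h => hx2 s₀ h.symm
      have hμle : ∀ s, s < t → μ ≤ dist x (F^[s] z) := fun s hst =>
        hs₀min s (Finset.mem_range.2 hst)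
      obtain ⟨N, hN⟩ := exists_pow_lt_of_lt_one
        (show (0:ℝ) < μ / (2 * ε) from div_pos hμpos (by linarith)) ha1
      obtain ⟨t', hNt', ht'1, hdt'⟩ := hrec x hx (μ / 2) (by linarith) N
      have hp : Function.IsPeriodicPt F t z := hzfix
      have hzmod : F^[t' % t] z = F^[t'] z := hp.iterate_mod_apply t'
      have hmodlt : t' % t < t := Nat.mod_lt _ (by omega)
      have h1 := hμle (t' % t) hmodlt
      rw [hzmod] at h1
      have h2 : dist x (F^[t'] z) ≤ dist x (F^[t'] x) + dist (F^[t'] x) (F^[t'] z) :=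
        dist_triangle _ _ _
      have h3 := (hLn t' x hx z hxz).2
      have h4 : a ^ t' ≤ a ^ N := pow_le_pow_of_le_one ha0 ha1.le hNt'
      have h5 : a ^ t' * dist x z ≤ a ^ N * ε := by
        have := pow_nonneg ha0 t'
        have := pow_nonneg ha0 N
        nlinarith [dist_nonneg (x := x) (y := z)]
      have h6 : a ^ N * ε < μ / 2 := by
        rw [lt_div_iff₀ (by positivity)] at hN
        nlinarith
      rw [dist_comm] at hdt'
      linarith
  refine ⟨?_, hper⟩
  -- separation of limit set
  have hsep2 : ∀ x ∈ limitSet F, ∀ y ∈ limitSet F, dist x y < ε → x = y := by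
    intro x hx y hy hxy
    by_contra hne'
    obtain ⟨p, hp1, hpx⟩ := hper x hx
    obtain ⟨q, hq1, hqy⟩ := hper y hy
    have h1 := (hLn (p * q) x hx y hxy).2
    have h2 : F^[p * q] x = x := by
      rw [Function.iterate_mul]
      exact Function.iterate_fixed hpx q
    have h3 : F^[p * q] y = y := by
      rw [mul_comm, Function.iterate_mul]
      exact Function.iterate_fixed hqy p
    rw [h2, h3] at h1
    have h4 : a ^ (p * q) < 1 := pow_lt_one₀ ha0 ha1 (by positivity)
    have h5 : 0 < dist x y := dist_pos.2 hne'
    nlinarith [pow_nonneg ha0 (p * q)]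
  -- finiteness from total boundedness
  have htb : TotallyBounded (Set.univ : Set X) := isCompact_univ.totallyBounded
  rw [Metric.totallyBounded_iff] at htb
  obtain ⟨T, hTfin, hTsub⟩ := htb (ε / 2) (by linarith)
  have hchoice : ∀ w : X, ∃ y, y ∈ T ∧ w ∈ Metric.ball y (ε / 2) := by
    intro w
    have := hTsub (Set.mem_univ w)
    simpa using this
  set c : X → X := fun w => (hchoice w).choose with hcdef
  have hcspec : ∀ w : X, c w ∈ T ∧ w ∈ Metric.ball (c w) (ε / 2) :=
    fun w => (hchoice w).choose_spec
  have hinj : Set.InjOn c (limitSet F) := by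
    intro x hx y hy hxy
    have h1 := (hcspec x).2
    have h2 := (hcspec y).2
    rw [Metric.mem_ball] at h1 h2
    apply hsep2 x hx y hy
    calc dist x y ≤ dist x (c x) + dist (c y) y := by
          rw [hxy]; exact dist_triangle _ _ _
      _ < ε := by rw [dist_comm (c y) y]; linarith
  exact Set.Finite.of_finite_image
    (hTfin.subset (by rintro w ⟨v, hv, rfl⟩; exact (hcspec v).1)) hinj
end

section
/- Let F : X → X be a piecewise contraction of a compact metric space with base partition P, and let C(t) = #P^t be its complexity (with P^1 = P and P^{t+1} = {F^{-1}(I) ∩ J : I ∈ P^t, J ∈ P}). Then the topological entropy satisfies h_top(X,F) ≤ limsup_{t→∞} (1/t) log C(t). -/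
open Filter

/-- Dynamical partitions: `dynPartition F P t` is the paper's `P^{t+1}`
(so `dynPartition F P 0 = P = P^1`). -/
def dynPartition {X : Type*} (F : X → X) (P : Set (Set X)) : ℕ → Set (Set X)
  | 0 => P
  | (t + 1) => {S | ∃ I ∈ dynPartition F P t, ∃ J ∈ P,
      S = F ⁻¹' I ∩ J ∧ S ≠ ∅}

/-- `E` is `(τ,ε)`-separated: any two distinct points of `E` are `ε`-apart at some
time `0 ≤ t ≤ τ`. -/
def IsSeparated {X : Type*} [MetricSpace X] (F : X → X) (τ : ℕ) (ε : ℝ)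
    (E : Set X) : Prop :=
  ∀ x ∈ E, ∀ y ∈ E, x ≠ y → ∃ t ≤ τ, ε ≤ dist (F^[t] x) (F^[t] y)

/-- `N(τ,ε)`: maximal cardinality of a `(τ,ε)`-separated set. -/
noncomputable def sepNum {X : Type*} [MetricSpace X] (F : X → X) (τ : ℕ) (ε : ℝ) : ℕ :=
  sSup {n : ℕ | ∃ E : Finset X, IsSeparated F τ ε ↑E ∧ E.card = n}

/-- Topological entropy `h_top = lim_{ε→0} limsup_τ log N(τ,ε)/τ`, written as the
supremum over `ε > 0` (the limsups are monotone in `ε`). -/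
noncomputable def htop {X : Type*} [MetricSpace X] (F : X → X) : EReal :=
  ⨆ (ε : ℝ) (_ : 0 < ε),
    Filter.limsup (fun τ : ℕ => ((Real.log (sepNum F τ ε) / τ : ℝ) : EReal)) atTop

/-! On an atom of `P^τ` the orbits of two points visit the same pieces of `P` up to time `τ - 1`,
and `F` does not expand distances on a piece; so two points of an atom are never farther apart at
times `≤ τ` than at time `0`. Hence a `(τ, ε)`-separated set meets each atom in an `ε`-separated
set, whose size is bounded by some `M(ε)` by compactness, and `N(τ, ε) ≤ C(τ) · M(ε)`. The factor
`M(ε)` does not affect the exponential growth rate. -/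

open LinearGrowth

section DynamicalPartition

variable {X : Type*} (F : X → X) {P : Set (Set X)}

lemma dynPartition_finite (hP : P.Finite) (t : ℕ) : (dynPartition F P t).Finite := by
  induction t with
  | zero => exact hP
  | succ t ih =>
    refine ((ih.prod hP).image fun p : Set X × Set X => F ⁻¹' p.1 ∩ p.2).subset ?_
    rintro S ⟨I, hI, J, hJ, rfl, -⟩
    exact ⟨(I, J), ⟨hI, hJ⟩, rfl⟩

lemma exists_mem_dynPartition (hP : ⋃₀ P = Set.univ) (t : ℕ) (x : X) :
    ∃ S ∈ dynPartition F P t, x ∈ S := by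
  induction t generalizing x with
  | zero => exact Set.mem_sUnion.mp (hP ▸ Set.mem_univ x)
  | succ t ih =>
    obtain ⟨I, hI, hxI⟩ := ih (F x)
    obtain ⟨J, hJ, hxJ⟩ := Set.mem_sUnion.mp (hP ▸ Set.mem_univ x)
    exact ⟨F ⁻¹' I ∩ J, ⟨I, hI, J, hJ, rfl, Set.nonempty_iff_ne_empty.mp ⟨x, hxI, hxJ⟩⟩,
      hxI, hxJ⟩

lemma exists_iterate_mem_of_mem_dynPartition {t : ℕ} {S : Set X}
    (hS : S ∈ dynPartition F P t) {x y : X} (hx : x ∈ S) (hy : y ∈ S) {n : ℕ} (hn : n ≤ t) :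
    ∃ J ∈ P, F^[n] x ∈ J ∧ F^[n] y ∈ J := by
  induction t generalizing S x y n with
  | zero => exact ⟨S, hS, by simpa [Nat.le_zero.mp hn] using ⟨hx, hy⟩⟩
  | succ t ih =>
    obtain ⟨I, hI, J, hJ, rfl, -⟩ := hS
    cases n with
    | zero => exact ⟨J, hJ, hx.2, hy.2⟩
    | succ m => exact ih hI hx.1 hy.1 (Nat.le_of_succ_le_succ hn)

variable [MetricSpace X]

lemma dist_iterate_le_of_mem_dynPartition
    (hF : ∀ A ∈ P, ∀ x ∈ A, ∀ y ∈ A, dist (F x) (F y) ≤ dist x y)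
    {t : ℕ} {S : Set X} (hS : S ∈ dynPartition F P t) {x y : X} (hx : x ∈ S) (hy : y ∈ S)
    {n : ℕ} (hn : n ≤ t + 1) : dist (F^[n] x) (F^[n] y) ≤ dist x y := by
  induction n with
  | zero => rfl
  | succ m ih =>
    obtain ⟨J, hJ, hxJ, hyJ⟩ :=
      exists_iterate_mem_of_mem_dynPartition F hS hx hy (n := m) (by omega)
    rw [Function.iterate_succ_apply', Function.iterate_succ_apply']
    exact (hF J hJ _ hxJ _ hyJ).trans (ih (by omega))

lemma IsSeparated.pairwise_le_dist_inter_mem_dynPartition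
    (hF : ∀ A ∈ P, ∀ x ∈ A, ∀ y ∈ A, dist (F x) (F y) ≤ dist x y)
    {τ : ℕ} {ε : ℝ} {E S : Set X} (hE : IsSeparated F τ ε E)
    (hS : S ∈ dynPartition F P (τ - 1)) :
    (E ∩ S).Pairwise fun x y => ε ≤ dist x y := by
  intro x hx y hy hxy
  obtain ⟨t, ht, hεt⟩ := hE x hx.1 y hy.1 hxy
  exact hεt.trans (dist_iterate_le_of_mem_dynPartition F hF hS hx.2 hy.2 (by omega))

lemma sepNum_le_ncard_dynPartition_mul (hP : P.Finite) (hcover : ⋃₀ P = Set.univ)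
    (hF : ∀ A ∈ P, ∀ x ∈ A, ∀ y ∈ A, dist (F x) (F y) ≤ dist x y) {ε : ℝ} {M : ℕ}
    (hM : ∀ E : Finset X, (E : Set X).Pairwise (fun x y => ε ≤ dist x y) → E.card ≤ M)
    (τ : ℕ) : sepNum F τ ε ≤ (dynPartition F P (τ - 1)).ncard * M := by
  classical
  refine csSup_le ⟨0, ∅, by simp [IsSeparated], rfl⟩ ?_
  rintro _ ⟨E, hE, rfl⟩
  choose atom hatom hmem using exists_mem_dynPartition F hcover (τ - 1)
  rw [Set.ncard_eq_toFinset_card _ (dynPartition_finite F hP _), mul_comm]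
  refine Finset.card_le_mul_card_image_of_maps_to (f := atom)
    (fun x _ => (dynPartition_finite F hP _).mem_toFinset.mpr (hatom x)) M fun S hS => hM _ ?_
  refine (hE.pairwise_le_dist_inter_mem_dynPartition F hF
    ((dynPartition_finite F hP _).mem_toFinset.mp hS)).mono fun x hx => ?_
  obtain ⟨hxE, rfl⟩ := Finset.mem_filter.mp hx
  exact ⟨hxE, hmem x⟩

end DynamicalPartition

lemma exists_card_le_of_pairwise_le_dist {X : Type*} [MetricSpace X] [CompactSpace X]
    {ε : ℝ} (hε : 0 < ε) :
    ∃ M : ℕ, ∀ E : Finset X, (E : Set X).Pairwise (fun x y => ε ≤ dist x y) → E.card ≤ M := by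
  -- `Metric.IsSeparated` is strict, so an `ε`-separated set is `2δ`-separated for `δ = ε / 4`.
  set δ : NNReal := (ε / 4).toNNReal
  obtain ⟨N, -, hNfin, hN⟩ := Metric.exists_finite_isCover_of_isCompact (ε := δ)
    (Real.toNNReal_pos.mpr (by positivity)).ne' (isCompact_univ (X := X))
  refine ⟨hNfin.toFinset.card, fun E hE => ?_⟩
  have hsep : Metric.IsSeparated ((2 * δ : NNReal) : ENNReal) (E : Set X) := by
    intro x hx y hy hxy
    have hεxy := hE hx hy hxy
    rw [edist_dist, ← ENNReal.ofReal_coe_nnreal, ENNReal.ofReal_lt_ofReal_iff (by linarith)]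
    simp only [δ, NNReal.coe_mul, NNReal.coe_ofNat, Real.coe_toNNReal _ (by positivity : 0 ≤ ε / 4)]
    linarith
  have hcard := (hsep.encard_le_packingNumber (Set.subset_univ _)).trans
    ((Metric.packingNumber_two_mul_le_externalCoveringNumber δ _).trans
      hN.externalCoveringNumber_le_encard)
  rwa [Set.encard_coe_eq_coe_finsetCard, hNfin.encard_eq_coe_toFinset_card, Nat.cast_le] at hcard

lemma log_natCast_le_log_add_log_of_le_mul {a b c : ℕ} (h : a ≤ b * c) :
    Real.log a ≤ Real.log b + Real.log c := by
  rcases Nat.eq_zero_or_pos a with rfl | ha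
  · simp only [Nat.cast_zero, Real.log_zero]
    positivity
  have hb : 0 < b := Nat.pos_of_mul_pos_right (ha.trans_le h)
  have hc : 0 < c := Nat.pos_of_mul_pos_left (ha.trans_le h)
  rw [← Real.log_mul (by positivity) (by positivity), ← Nat.cast_mul]
  exact Real.log_le_log (by exact_mod_cast ha) (by exact_mod_cast h)

lemma limsup_coe_div_natCast_eq_linearGrowthSup (u : ℕ → ℝ) :
    limsup (fun n : ℕ => ((u n / n : ℝ) : EReal)) atTop =
      linearGrowthSup fun n => (u n : EReal) := by
  simp only [linearGrowthSup, EReal.coe_div, EReal.coe_coe_eq_natCast]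

lemma limsup_log_div_le_of_le_mul {N C : ℕ → ℕ} {M : ℕ} (h : ∀ n, N n ≤ C n * M) :
    limsup (fun n : ℕ => ((Real.log (N n) / n : ℝ) : EReal)) atTop
      ≤ limsup (fun n : ℕ => ((Real.log (C n) / n : ℝ) : EReal)) atTop := by
  rw [limsup_coe_div_natCast_eq_linearGrowthSup, limsup_coe_div_natCast_eq_linearGrowthSup]
  exact linearGrowthSup_le_of_eventually_le (b := (Real.log M : EReal)) (EReal.coe_ne_top _)
    (Eventually.of_forall fun n => by
      exact_mod_cast log_natCast_le_log_add_log_of_le_mul (h n))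

theorem stmt_6_general {X : Type*} [MetricSpace X] [CompactSpace X]
    (F : X → X) (a : ℝ) (ha1 : a < 1)
    (P : Set (Set X)) (hPfin : P.Finite)
    (hcover : ⋃₀ P = Set.univ)
    (hcontr : ∀ A ∈ P, ∀ x ∈ A, ∀ y ∈ A, dist (F x) (F y) ≤ a * dist x y) :
    htop F ≤ Filter.limsup
      (fun t : ℕ =>
        ((Real.log ((dynPartition F P (t - 1)).ncard) / t : ℝ) : EReal)) atTop := by
  have hF : ∀ A ∈ P, ∀ x ∈ A, ∀ y ∈ A, dist (F x) (F y) ≤ dist x y := fun A hA x hx y hy =>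
    (hcontr A hA x hx y hy).trans (mul_le_of_le_one_left dist_nonneg ha1.le)
  refine iSup₂_le fun ε hε => ?_
  obtain ⟨M, hM⟩ := exists_card_le_of_pairwise_le_dist (X := X) hε
  exact limsup_log_div_le_of_le_mul (sepNum_le_ncard_dynPartition_mul F hPfin hcover hF hM)

/-- for a piecewise contraction `F` of a compact metric space with finite
base partition `P` and complexity `C(t) = #P^t`, the topological entropy satisfies
`h_top ≤ limsup_t (log C(t))/t`. -/
theorem stmt_6 {X : Type*} [MetricSpace X] [CompactSpace X]
    (F : X → X) (a : ℝ) (ha0 : 0 ≤ a) (ha1 : a < 1)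
    (P : Set (Set X)) (hPfin : P.Finite)
    (hcover : ⋃₀ P = Set.univ)
    (hdisj : P.Pairwise Disjoint)
    (hcontr : ∀ A ∈ P, ∀ x ∈ A, ∀ y ∈ A, dist (F x) (F y) ≤ a * dist x y) :
    htop F ≤ Filter.limsup
      (fun t : ℕ =>
        ((Real.log ((dynPartition F P (t - 1)).ncard) / t : ℝ) : EReal)) atTop :=
  stmt_6_general F a ha1 P hPfin hcover hcontr
end

section
/- Let ([0,1]^d, F) be a discrete time regulatory network satisfying coordinatewise injectivity, with dynamical partitions P^t and Q^{t+1} = F^t(P^{t+1}). For each coordinate 1 ≤ i ≤ d and each t ∈ ℕ, the collection of projected intervals Q^t_i = { Π_i(J) : J ∈ Q^t } consists of pairwise disjoint intervals. -/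
/-- Heaviside function: `H(x) = 0` if `x ≤ 0`, `1` otherwise. -/
noncomputable def heav (x : ℝ) : ℝ := if x ≤ 0 then 0 else 1

/-- The discrete time regulatory network map
`F(x)_j = a x_j + (1−a) Σ_i K_{i,j} H(s_{i,j}(x_i − T_{i,j}))`. -/
noncomputable def regNet (d : ℕ) (K T s : Matrix (Fin d) (Fin d) ℝ) (a : ℝ) :
    (Fin d → ℝ) → Fin d → ℝ :=
  fun x j => a * x j + (1 - a) * ∑ i, K i j * heav (s i j * (x i - T i j))

/-- The threshold partition `P_i` of `[0,1]`: atoms are the level sets of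
`x ↦ (H(s_{i,j}(x − T_{i,j})))_j` intersected with `[0,1]`. -/
def basePartI (d : ℕ) (T s : Matrix (Fin d) (Fin d) ℝ) (i : Fin d) :
    Set (Set ℝ) :=
  {A | ∃ x ∈ Set.Icc (0:ℝ) 1, A = {y ∈ Set.Icc (0:ℝ) 1 |
      ∀ j, heav (s i j * (y - T i j)) = heav (s i j * (x - T i j))}}

/-- The base partition `P = ∏_i P_i` of `[0,1]^d`. -/
def baseP (d : ℕ) (T s : Matrix (Fin d) (Fin d) ℝ) :
    Set (Set (Fin d → ℝ)) :=
  {A | ∃ g : Fin d → Set ℝ, (∀ i, g i ∈ basePartI d T s i) ∧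
      A = {x | ∀ i, x i ∈ g i}}

/-- `Q^t = F^{t-1}(P^t)`, the image at time `t−1` of the dynamical partition `P^t`
(for `t ≥ 1`). -/
noncomputable def Qcoll (d : ℕ) (K T s : Matrix (Fin d) (Fin d) ℝ) (a : ℝ)
    (t : ℕ) : Set (Set (Fin d → ℝ)) :=
  (fun S => (regNet d K T s a)^[t - 1] '' S) ''
    dynPartition (regNet d K T s a) (baseP d T s) (t - 1)

/-- Projection of a set on the `i`-th coordinate. -/
def proj {d : ℕ} (i : Fin d) (A : Set (Fin d → ℝ)) : Set ℝ :=
  (fun x => x i) '' A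

/-- `Q^t_i`: the `i`-th coordinate projections of the sets in `Q^t`. -/
noncomputable def Qproj (d : ℕ) (K T s : Matrix (Fin d) (Fin d) ℝ) (a : ℝ)
    (t : ℕ) (i : Fin d) : Set (Set ℝ) :=
  {J | ∃ A ∈ Qcoll d K T s a t, J = proj i A}

/-- Coordinatewise injectivity: for each coordinate `j`, distinct affine contractions
`x ↦ a x + (1−a) Σ_i ε_i K_{i,j}` of the family `F_j` have disjoint images of `[0,1]`. -/
def CoordInj (d : ℕ) (K : Matrix (Fin d) (Fin d) ℝ) (a : ℝ) : Prop :=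
  ∀ j : Fin d, ∀ ε ε' : Fin d → Bool,
    (∑ i, if ε i then K i j else 0) ≠ (∑ i, if ε' i then K i j else 0) →
    Disjoint
      ((fun x => a * x + (1 - a) * ∑ i, if ε i then K i j else 0) '' Set.Icc (0:ℝ) 1)
      ((fun x => a * x + (1 - a) * ∑ i, if ε' i then K i j else 0) '' Set.Icc (0:ℝ) 1)

/-! On an atom of the base partition every Heaviside switch is frozen, so `F` acts there
coordinatewise through one affine branch of each family `F_j`. Hence `F^n(S)`, for
`S ∈ P^{n+1}`, is a box, and each side of `F^{n+1}(S)` has the form `f(A) ∩ I` with `f ∈ F_i`,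
`A` a side at time `n` and `I ∈ P_i`. Two such sides are equal or disjoint: distinct atoms of
`P_i` are disjoint, distinct branches separate `[0,1]` by coordinatewise injectivity, and a
single affine branch is injective or constant, so it maps the (inductively) disjoint sides at
time `n` to equal or disjoint sets. -/

open Set

lemma mul_heav_eq_ite (k v : ℝ) : k * heav v = if 0 < v then k else 0 := by
  unfold heav
  by_cases hv : 0 < v
  · simp [hv, not_le.mpr hv]
  · simp [hv, not_lt.mp hv]

/-- The members of the paper's family `F_j`. -/
def regNetBranch {d : ℕ} (K : Matrix (Fin d) (Fin d) ℝ) (a : ℝ) (j : Fin d)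
    (ε : Fin d → Bool) (y : ℝ) : ℝ :=
  a * y + (1 - a) * ∑ i, if ε i then K i j else 0

lemma pairwise_disjoint_image_affine {As : Set (Set ℝ)} (hAs : As.Pairwise Disjoint) (c b : ℝ) :
    ((fun A => (fun y => c * y + b) '' A) '' As).Pairwise Disjoint := by
  rintro _ ⟨A, hA, rfl⟩ _ ⟨A', hA', rfl⟩ hne
  by_cases hc : c = 0
  · have hsub : ∀ B : Set ℝ, (fun y => c * y + b) '' B ⊆ {b} := by
      rintro B _ ⟨y, -, rfl⟩
      simp [hc]
    rcases subset_singleton_iff_eq.mp (hsub A) with h | h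
    · simp only [h, empty_disjoint]
    rcases subset_singleton_iff_eq.mp (hsub A') with h' | h'
    · simp only [h', disjoint_empty]
    exact absurd (h.trans h'.symm) hne
  · have hinj : Function.Injective fun y => c * y + b := fun x y hxy =>
      mul_left_cancel₀ hc (add_right_cancel hxy)
    exact (hAs hA hA' fun h => hne (h ▸ rfl)).image hinj.injOn (subset_univ _) (subset_univ _)

lemma pairwise_disjoint_image_inter {ι α β : Type*} {g : ι → α → β} {U : Set α} {As : Set (Set α)}
    {Is : Set (Set β)} (hg : ∀ c, ((g c '' ·) '' As).Pairwise Disjoint)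
    (hgU : ∀ c c', g c = g c' ∨ Disjoint (g c '' U) (g c' '' U))
    (hAsU : ∀ A ∈ As, A ⊆ U) (hIs : Is.Pairwise Disjoint) :
    {B | ∃ c, ∃ A ∈ As, ∃ I ∈ Is, B = g c '' A ∩ I}.Pairwise Disjoint := by
  rintro _ ⟨c, A, hA, I, hI, rfl⟩ _ ⟨c', A', hA', I', hI', rfl⟩ hne
  rcases hgU c c' with hcc' | hdis
  · rw [← hcc'] at hne ⊢
    by_cases hII' : I = I'
    · subst hII'
      by_cases hAA' : g c '' A = g c '' A'
      · exact absurd (by rw [hAA']) hne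
      · exact (hg c (mem_image_of_mem _ hA) (mem_image_of_mem _ hA') hAA').mono
          inter_subset_left inter_subset_left
    · exact (hIs hI hI' hII').mono inter_subset_right inter_subset_right
  · exact hdis.mono ((image_mono (hAsU A hA)).trans' inter_subset_left)
      ((image_mono (hAsU A' hA')).trans' inter_subset_left)

lemma regNetBranch_eq_or_disjoint {d : ℕ} {K : Matrix (Fin d) (Fin d) ℝ} {a : ℝ}
    (hinj : CoordInj d K a) (j : Fin d) (ε ε' : Fin d → Bool) :
    regNetBranch K a j ε = regNetBranch K a j ε' ∨
      Disjoint (regNetBranch K a j ε '' Icc 0 1) (regNetBranch K a j ε' '' Icc 0 1) := by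
  by_cases h : (∑ i, if ε i then K i j else 0) = ∑ i, if ε' i then K i j else 0
  · left
    funext y
    simp only [regNetBranch, h]
  · exact Or.inr (hinj j ε ε' h)

section DynPartition

variable {X : Type*} {F : X → X} {P : Set (Set X)}

lemma nonempty_of_mem_dynPartition (hP : ∀ J ∈ P, J.Nonempty) :
    ∀ {n : ℕ} {S : Set X}, S ∈ dynPartition F P n → S.Nonempty
  | 0, _, hS => hP _ hS
  | _ + 1, _, ⟨_, _, _, _, rfl, hne⟩ => nonempty_iff_ne_empty.mpr hne

/-- The refinement `P^{n+2} = F⁻¹ P^{n+1} ∨ P` can also be peeled off from the other end: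
`P^{n+2} = P^{n+1} ∨ F^{-(n+1)} P`. -/
lemma exists_eq_inter_preimage_iterate_of_mem_dynPartition :
    ∀ {n : ℕ} {S : Set X}, S ∈ dynPartition F P (n + 1) →
      ∃ S₀ ∈ dynPartition F P n, ∃ I ∈ P, S = S₀ ∩ F^[n + 1] ⁻¹' I
  | 0, _, ⟨I, hI, J, hJ, hS, _⟩ => ⟨J, hJ, I, hI, hS.trans (inter_comm _ _)⟩
  | n + 1, S, ⟨I, hI, J, hJ, hS, hne⟩ => by
    obtain ⟨I₀, hI₀, I', hI', rfl⟩ := exists_eq_inter_preimage_iterate_of_mem_dynPartition hI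
    have hS' : S = (F ⁻¹' I₀ ∩ J) ∩ F^[n + 2] ⁻¹' I' := by
      rw [hS, Function.iterate_succ, preimage_comp]
      ext x
      simp only [mem_inter_iff, mem_preimage]
      tauto
    refine ⟨F ⁻¹' I₀ ∩ J, ⟨I₀, hI₀, J, hJ, rfl, ?_⟩, I', hI', hS'⟩
    exact ((nonempty_iff_ne_empty.mpr hne).mono (hS'.trans_subset inter_subset_left)).ne_empty

lemma exists_image_iterate_subset_of_mem_dynPartition {n : ℕ} {S : Set X}
    (hS : S ∈ dynPartition F P n) : ∃ I ∈ P, F^[n] '' S ⊆ I := by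
  cases n with
  | zero => exact ⟨S, hS, (image_id S).subset⟩
  | succ n =>
    obtain ⟨S₀, -, I, hI, rfl⟩ := exists_eq_inter_preimage_iterate_of_mem_dynPartition hS
    exact ⟨I, hI, (image_inter_preimage _ _ _).trans_subset inter_subset_right⟩

end DynPartition

section RegNet

variable {d : ℕ} {K T s : Matrix (Fin d) (Fin d) ℝ} {a : ℝ}

lemma basePartI_subset_Icc {i : Fin d} {A : Set ℝ} (hA : A ∈ basePartI d T s i) :
    A ⊆ Icc 0 1 := by
  obtain ⟨x, -, rfl⟩ := hA
  exact fun y hy => hy.1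

lemma basePartI_nonempty {i : Fin d} {A : Set ℝ} (hA : A ∈ basePartI d T s i) :
    A.Nonempty := by
  obtain ⟨x, hx, rfl⟩ := hA
  exact ⟨x, hx, fun _ => rfl⟩

lemma basePartI_pairwise_disjoint (i : Fin d) : (basePartI d T s i).Pairwise Disjoint := by
  rintro _ ⟨x, -, rfl⟩ _ ⟨x', -, rfl⟩ hne
  refine disjoint_left.mpr fun z hz hz' => hne ?_
  ext y
  exact and_congr_right fun _ => forall_congr' fun j => by rw [← hz.2 j, hz'.2 j]

lemma exists_eq_univ_pi_of_mem_baseP {J : Set (Fin d → ℝ)} (hJ : J ∈ baseP d T s) :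
    ∃ g : Fin d → Set ℝ, (∀ i, g i ∈ basePartI d T s i) ∧ J = pi univ g := by
  obtain ⟨g, hg, rfl⟩ := hJ
  exact ⟨g, hg, by ext x; simp⟩

lemma subset_univ_pi_Icc_of_mem_baseP {J : Set (Fin d → ℝ)} (hJ : J ∈ baseP d T s) :
    J ⊆ pi univ fun _ => Icc 0 1 := by
  obtain ⟨g, hg, rfl⟩ := exists_eq_univ_pi_of_mem_baseP hJ
  exact pi_mono fun i _ => basePartI_subset_Icc (hg i)

lemma nonempty_of_mem_baseP {J : Set (Fin d → ℝ)} (hJ : J ∈ baseP d T s) : J.Nonempty := by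
  obtain ⟨g, hg, rfl⟩ := exists_eq_univ_pi_of_mem_baseP hJ
  exact univ_pi_nonempty_iff.mpr fun i => basePartI_nonempty (hg i)

lemma exists_eqOn_regNet_of_mem_baseP {J : Set (Fin d → ℝ)} (hJ : J ∈ baseP d T s) :
    ∃ ε : Fin d → Fin d → Bool,
      EqOn (regNet d K T s a) (Pi.map fun j => regNetBranch K a j (ε j)) J := by
  obtain ⟨g, hg, rfl⟩ := hJ
  choose x₀ _ hx₀ using hg
  refine ⟨fun j i => decide (0 < s i j * (x₀ i - T i j)), fun x hx => funext fun j => ?_⟩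
  have hswitch : ∀ i, heav (s i j * (x i - T i j)) = heav (s i j * (x₀ i - T i j)) :=
    fun i => by
      have := hx i
      rw [hx₀ i] at this
      exact this.2 j
  simp only [regNet, Pi.map_apply, regNetBranch, hswitch, mul_heav_eq_ite,
    decide_eq_true_eq]

lemma exists_regNet_image_univ_pi {J : Set (Fin d → ℝ)} (hJ : J ∈ baseP d T s)
    {B : Fin d → Set ℝ} (hBJ : pi univ B ⊆ J) :
    ∃ ε : Fin d → Fin d → Bool,
      regNet d K T s a '' pi univ B = pi univ fun j => regNetBranch K a j (ε j) '' B j := by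
  obtain ⟨ε, hε⟩ := exists_eqOn_regNet_of_mem_baseP (K := K) (a := a) hJ
  exact ⟨ε, ((hε.mono hBJ).image_eq).trans (piMap_image_univ_pi _ _)⟩

lemma proj_univ_pi {B : Fin d → Set ℝ} (hB : (pi univ B).Nonempty) (i : Fin d) :
    proj i (pi univ B) = B i :=
  eval_image_univ_pi hB

lemma regNet_iterate_succ_image_inter_preimage {n : ℕ} {S₀ J I : Set (Fin d → ℝ)}
    {B : Fin d → Set ℝ} (hB : (regNet d K T s a)^[n] '' S₀ = pi univ B)
    (hJ : J ∈ baseP d T s) (hBJ : pi univ B ⊆ J) (hI : I ∈ baseP d T s) :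
    ∃ (ε : Fin d → Fin d → Bool) (h : Fin d → Set ℝ), (∀ j, h j ∈ basePartI d T s j) ∧
      (regNet d K T s a)^[n + 1] '' (S₀ ∩ (regNet d K T s a)^[n + 1] ⁻¹' I) =
        pi univ fun j => regNetBranch K a j (ε j) '' B j ∩ h j := by
  obtain ⟨ε, hε⟩ := exists_regNet_image_univ_pi (K := K) (a := a) hJ hBJ
  obtain ⟨h, hh, rfl⟩ := exists_eq_univ_pi_of_mem_baseP hI
  refine ⟨ε, h, hh, ?_⟩
  rw [image_inter_preimage, Function.iterate_succ', image_comp, hB, hε, pi_inter_distrib]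

lemma exists_regNet_iterate_image_eq_univ_pi :
    ∀ {n : ℕ} {S : Set (Fin d → ℝ)},
      S ∈ dynPartition (regNet d K T s a) (baseP d T s) n →
        ∃ B : Fin d → Set ℝ, (regNet d K T s a)^[n] '' S = pi univ B
  | 0, S, hS => by
    obtain ⟨g, -, rfl⟩ := exists_eq_univ_pi_of_mem_baseP hS
    exact ⟨g, image_id _⟩
  | n + 1, S, hS => by
    obtain ⟨S₀, hS₀, I, hI, rfl⟩ := exists_eq_inter_preimage_iterate_of_mem_dynPartition hS
    obtain ⟨B, hB⟩ := exists_regNet_iterate_image_eq_univ_pi hS₀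
    obtain ⟨J, hJ, hBJ⟩ := exists_image_iterate_subset_of_mem_dynPartition hS₀
    obtain ⟨ε, h, -, hεh⟩ := regNet_iterate_succ_image_inter_preimage hB hJ (hB ▸ hBJ) hI
    exact ⟨_, hεh⟩

lemma Qproj_one_subset (i : Fin d) : Qproj d K T s a 1 i ⊆ basePartI d T s i := by
  rintro _ ⟨_, ⟨S, hS, rfl⟩, rfl⟩
  obtain ⟨g, hg, rfl⟩ := exists_eq_univ_pi_of_mem_baseP hS
  have hne := nonempty_of_mem_baseP hS
  simp only [Nat.sub_self, Function.iterate_zero, image_id]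
  rw [proj_univ_pi hne]
  exact hg i

lemma subset_Icc_of_mem_Qproj {n : ℕ} {i : Fin d} {A : Set ℝ}
    (hA : A ∈ Qproj d K T s a (n + 1) i) : A ⊆ Icc 0 1 := by
  obtain ⟨_, ⟨S, hS, rfl⟩, rfl⟩ := hA
  obtain ⟨J, hJ, hSJ⟩ := exists_image_iterate_subset_of_mem_dynPartition hS
  rintro _ ⟨x, hx, rfl⟩
  exact subset_univ_pi_Icc_of_mem_baseP hJ (hSJ hx) i (mem_univ i)

/-- The paper's `Q_i^{n+2} ⊆ { f(A) ∩ I : f ∈ F_i, A ∈ Q_i^{n+1}, I ∈ P_i }`. -/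
lemma Qproj_succ_succ_subset (n : ℕ) (i : Fin d) :
    Qproj d K T s a (n + 2) i ⊆ {B | ∃ ε, ∃ A ∈ Qproj d K T s a (n + 1) i,
      ∃ I ∈ basePartI d T s i, B = regNetBranch K a i ε '' A ∩ I} := by
  rintro _ ⟨_, ⟨S, hS, rfl⟩, rfl⟩
  rw [show n + 2 - 1 = n + 1 by omega] at hS ⊢
  have hne : ((regNet d K T s a)^[n + 1] '' S).Nonempty :=
    (nonempty_of_mem_dynPartition (fun _ => nonempty_of_mem_baseP) hS).image _
  obtain ⟨S₀, hS₀, I, hI, rfl⟩ := exists_eq_inter_preimage_iterate_of_mem_dynPartition hS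
  obtain ⟨B, hB⟩ := exists_regNet_iterate_image_eq_univ_pi hS₀
  obtain ⟨J, hJ, hBJ⟩ := exists_image_iterate_subset_of_mem_dynPartition hS₀
  obtain ⟨ε, h, hh, hεh⟩ := regNet_iterate_succ_image_inter_preimage hB hJ (hB ▸ hBJ) hI
  have hB₀ : (pi univ B).Nonempty :=
    hB ▸ (nonempty_of_mem_dynPartition (fun _ => nonempty_of_mem_baseP) hS₀).image _
  refine ⟨ε i, proj i (pi univ B), ⟨_, ⟨S₀, hS₀, by simpa using hB⟩, rfl⟩, h i, hh i, ?_⟩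
  dsimp only
  rw [hεh] at hne ⊢
  rw [proj_univ_pi hne, proj_univ_pi hB₀]

end RegNet

theorem stmt_8_general (d : ℕ) (K T s : Matrix (Fin d) (Fin d) ℝ) (a : ℝ)
    (hinj : CoordInj d K a) :
    ∀ t : ℕ, 1 ≤ t → ∀ i : Fin d,
      (Qproj d K T s a t i).Pairwise Disjoint := by
  intro t ht i
  obtain ⟨n, rfl⟩ := Nat.exists_eq_add_of_le' ht
  clear ht
  induction n with
  | zero => exact (basePartI_pairwise_disjoint i).mono (Qproj_one_subset i)
  | succ n ih =>
    exact (pairwise_disjoint_image_inter (fun _ => pairwise_disjoint_image_affine ih a _)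
      (regNetBranch_eq_or_disjoint hinj i) (fun _ => subset_Icc_of_mem_Qproj)
      (basePartI_pairwise_disjoint i)).mono (Qproj_succ_succ_subset n i)

/-- for a coordinatewise injective discrete time regulatory network,
for each coordinate `i` and each `t ≥ 1`, the projected intervals in `Q^t_i` are
pairwise disjoint. -/
theorem stmt_8 (d : ℕ) (K T s : Matrix (Fin d) (Fin d) ℝ) (a : ℝ)
    (ha0 : 0 ≤ a) (ha1 : a < 1)
    (hK : ∀ i j, K i j ∈ Set.Icc (0:ℝ) 1) (hKnorm : ∀ j, ∑ i, K i j = 1)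
    (hT : ∀ i j, T i j ∈ Set.Icc (0:ℝ) 1)
    (hs : ∀ i j, s i j = -1 ∨ s i j = 0 ∨ s i j = 1)
    (hcompat : ∀ i j, s i j = 0 ↔ K i j = 0)
    (hinj : CoordInj d K a) :
    ∀ t : ℕ, 1 ≤ t → ∀ i : Fin d,
      (Qproj d K T s a t i).Pairwise Disjoint :=
  stmt_8_general d K T s a hinj
end

section
/- Abstract version of the 1-dimensional self-inhibitor complexity bound: let F : [0,1] → [0,1] be an injective map given by F(x) = a x + (1−a)H(T − x) with 0 < a < 1 and 0 < T < 1, restricted to the invariant interval I = [aT, aT + (1−a)]. For each t ∈ ℕ, the number of domains of continuity of F^t on I (i.e., the number of atoms of the t-th dynamical partition of I under the partition I = I_0 ∪ I_1 with I_0 = [T, aT+(1−a)], I_1 = [aT, T)) is at most t + 2. -/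
/-- for the self-inhibitor `F(x) = a x + (1−a)H(T − x)` with
`0 < a < 1`, `0 < T < 1`, injective on the invariant interval
`I = [aT, aT + (1−a)]` partitioned into `I_0 = [T, aT+(1−a)]` and `I_1 = [aT, T)`,
the number of atoms of the `t`-th dynamical partition (the domains of continuity
of `F^t` on `I`) is at most `t + 2`. -/
theorem stmt_10 (a T : ℝ) (ha0 : 0 < a) (ha1 : a < 1) (hT0 : 0 < T) (hT1 : T < 1)
    (F : ℝ → ℝ) (hF : ∀ x, F x = a * x + (1 - a) * heav (T - x))
    (hinj : Set.InjOn F (Set.Icc (a * T) (a * T + (1 - a)))) :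
    ∀ t : ℕ, 1 ≤ t →
      (dynPartition F {Set.Icc T (a * T + (1 - a)), Set.Ico (a * T) T}
        (t - 1)).ncard ≤ t + 2 := by
  set I₀ : Set ℝ := Set.Icc T (a * T + (1 - a)) with hI₀
  set I₁ : Set ℝ := Set.Ico (a * T) T with hI₁
  set P : Set (Set ℝ) := {I₀, I₁} with hPdef
  set g : ℝ := a ^ 2 * T + (1 - a ^ 2) / 2 with hg
  have hF0 : ∀ x ∈ I₀, F x = a * x + 0 := by
    intro x hx
    rw [hF, heav, if_pos (by linarith [hx.1])]; ring
  have hF1 : ∀ x ∈ I₁, F x = a * x + (1 - a) := by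
    intro x hx
    rw [hF, heav, if_neg (by push_neg; linarith [hx.2])]; ring
  -- convexity of pieces
  have hconvKey : ∀ (I J : Set ℝ) (c : ℝ), Convex ℝ I → Convex ℝ J →
      (∀ x ∈ J, F x = a * x + c) → Convex ℝ (F ⁻¹' I ∩ J) := by
    intro I J c hI hJ hFJ x hx y hy p q hp hq hpq
    have hz : p • x + q • y ∈ J := hJ hx.2 hy.2 hp hq hpq
    refine ⟨?_, hz⟩
    have heq : F (p • x + q • y) = p • (F x) + q • (F y) := by
      rw [hFJ _ hz, hFJ _ hx.2, hFJ _ hy.2]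
      simp only [smul_eq_mul]
      have hq1 : q = 1 - p := by linarith
      rw [hq1]; ring
    rw [Set.mem_preimage, heq]
    exact hI hx.1 hy.1 hp hq hpq
  have key : ∀ s : ℕ,
      (dynPartition F P s).Finite ∧
      (∀ S ∈ dynPartition F P s, Convex ℝ S) ∧
      (∀ S₁ ∈ dynPartition F P s, ∀ S₂ ∈ dynPartition F P s, S₁ ≠ S₂ → S₁ ∩ S₂ = ∅) ∧
      (dynPartition F P s).ncard ≤ s + 2 := by
    intro s
    induction s with
    | zero =>
      refine ⟨(Set.finite_singleton I₁).insert I₀, ?_, ?_, ?_⟩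
      · intro S hS
        rcases hS with h | h
        · rw [h]; exact convex_Icc _ _
        · rw [Set.mem_singleton_iff.mp h]; exact convex_Ico _ _
      · have hdisj01 : I₀ ∩ I₁ = ∅ := by
          ext x
          simp only [hI₀, hI₁, Set.mem_inter_iff, Set.mem_Icc, Set.mem_Ico,
            Set.mem_empty_iff_false, iff_false]
          rintro ⟨⟨h1, _⟩, ⟨_, h2⟩⟩; linarith
        intro S₁ hS₁ S₂ hS₂ hne
        rcases hS₁ with h1 | h1 <;> rcases hS₂ with h2 | h2 <;>
          try simp only [Set.mem_singleton_iff] at *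
        · exact absurd (h1.trans h2.symm) hne
        · rw [h1, h2]; exact hdisj01
        · rw [h1, h2, Set.inter_comm]; exact hdisj01
        · exact absurd (h1.trans h2.symm) hne
      · calc (dynPartition F P 0).ncard = P.ncard := rfl
          _ ≤ 1 + 1 := le_trans (Set.ncard_insert_le _ _) (by
              simp [Set.ncard_singleton])
          _ ≤ 0 + 2 := by norm_num
    | succ s ih =>
      obtain ⟨hfin, hconv, hdisj, hcard⟩ := ih
      set Q := dynPartition F P s with hQ
      -- membership description of the next level
      have hmem : ∀ S, S ∈ dynPartition F P (s + 1) ↔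
          ∃ I ∈ Q, ∃ J ∈ P, S = F ⁻¹' I ∩ J ∧ S ≠ ∅ := by
        intro S; rfl
      -- the key geometric fact: if the preimage of I meets both pieces, then g ∈ I
      have hgap : ∀ I ∈ Q, (F ⁻¹' I ∩ I₀).Nonempty → (F ⁻¹' I ∩ I₁).Nonempty → g ∈ I := by
        intro I hI ⟨x₀, hx₀⟩ ⟨x₁, hx₁⟩
        have hy₀ : F x₀ ∈ I := hx₀.1
        have hy₁ : F x₁ ∈ I := hx₁.1
        have hv₀ : F x₀ ≤ g := by
          rw [hF0 _ hx₀.2, hg]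
          nlinarith [mul_le_mul_of_nonneg_left hx₀.2.2 ha0.le, sq_nonneg (1 - a)]
        have hv₁ : g ≤ F x₁ := by
          rw [hF1 _ hx₁.2, hg]
          nlinarith [mul_le_mul_of_nonneg_left hx₁.2.1 ha0.le, sq_nonneg (1 - a)]
        exact (hconv I hI).ordConnected.out hy₀ hy₁ ⟨hv₀, hv₁⟩
      set Q₀ := {I ∈ Q | (F ⁻¹' I ∩ I₀).Nonempty} with hQ₀
      set Q₁ := {I ∈ Q | (F ⁻¹' I ∩ I₁).Nonempty} with hQ₁
      have hQ₀sub : Q₀ ⊆ Q := fun I hI => hI.1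
      have hQ₁sub : Q₁ ⊆ Q := fun I hI => hI.1
      have hQ₀fin : Q₀.Finite := hfin.subset hQ₀sub
      have hQ₁fin : Q₁.Finite := hfin.subset hQ₁sub
      have hsub : dynPartition F P (s + 1) ⊆
          ((fun I => F ⁻¹' I ∩ I₀) '' Q₀) ∪ ((fun I => F ⁻¹' I ∩ I₁) '' Q₁) := by
        intro S hS
        obtain ⟨I, hI, J, hJ, hSeq, hSne⟩ := (hmem S).mp hS
        rcases hJ with hJ | hJ
        · left
          refine ⟨I, ⟨hI, ?_⟩, ?_⟩
          · rw [← hJ, ← hSeq]; exact Set.nonempty_iff_ne_empty.mpr hSne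
          · rw [hSeq, hJ]
        · right
          rw [Set.mem_singleton_iff] at hJ
          refine ⟨I, ⟨hI, ?_⟩, ?_⟩
          · rw [← hJ, ← hSeq]; exact Set.nonempty_iff_ne_empty.mpr hSne
          · rw [hSeq, hJ]
      have hfin' : (dynPartition F P (s + 1)).Finite :=
        Set.Finite.subset ((hQ₀fin.image _).union (hQ₁fin.image _)) hsub
      refine ⟨hfin', ?_, ?_, ?_⟩
      · -- convexity
        intro S hS
        obtain ⟨I, hI, J, hJ, hSeq, -⟩ := (hmem S).mp hS
        rcases hJ with hJ | hJ
        · rw [hSeq, hJ]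
          exact hconvKey I I₀ 0 (hconv I hI) (convex_Icc _ _) hF0
        · rw [Set.mem_singleton_iff] at hJ
          rw [hSeq, hJ]
          exact hconvKey I I₁ (1 - a) (hconv I hI) (convex_Ico _ _) hF1
      · -- pairwise disjoint
        intro S₁ hS₁ S₂ hS₂ hne
        obtain ⟨I₁', hI₁', J₁, hJ₁, hSeq₁, -⟩ := (hmem S₁).mp hS₁
        obtain ⟨I₂', hI₂', J₂, hJ₂, hSeq₂, -⟩ := (hmem S₂).mp hS₂
        by_cases hII : I₁' = I₂'
        · have hJJ : J₁ ≠ J₂ := by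
            intro h; exact hne (by rw [hSeq₁, hSeq₂, hII, h])
          have hdisjJ : J₁ ∩ J₂ = ∅ := by
            have hd01 : I₀ ∩ I₁ = ∅ := by
              ext x
              simp only [hI₀, hI₁, Set.mem_inter_iff, Set.mem_Icc, Set.mem_Ico,
                Set.mem_empty_iff_false, iff_false]
              rintro ⟨⟨h1, _⟩, ⟨_, h2⟩⟩; linarith
            simp only [hPdef, Set.mem_insert_iff, Set.mem_singleton_iff] at hJ₁ hJ₂
            rcases hJ₁ with h1 | h1 <;> rcases hJ₂ with h2 | h2
            · exact absurd (h1.trans h2.symm) hJJ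
            · rw [h1, h2]; exact hd01
            · rw [h1, h2, Set.inter_comm]; exact hd01
            · exact absurd (h1.trans h2.symm) hJJ
          rw [hSeq₁, hSeq₂]
          rw [Set.eq_empty_iff_forall_notMem] at hdisjJ ⊢
          intro x hx
          exact hdisjJ x ⟨hx.1.2, hx.2.2⟩
        · have hdisjI : I₁' ∩ I₂' = ∅ := hdisj _ hI₁' _ hI₂' hII
          rw [hSeq₁, hSeq₂]
          rw [Set.eq_empty_iff_forall_notMem] at hdisjI ⊢
          intro x hx
          exact hdisjI (F x) ⟨hx.1.1, hx.2.1⟩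
      · -- cardinality
        have hinter : (Q₀ ∩ Q₁).ncard ≤ 1 := by
          rw [Set.ncard_le_one (hfin.subset (fun I hI => hQ₀sub hI.1))]
          intro I hI I' hI'
          have hgI : g ∈ I := hgap I hI.1.1 hI.1.2 hI.2.2
          have hgI' : g ∈ I' := hgap I' hI'.1.1 hI'.1.2 hI'.2.2
          by_contra hne
          have := hdisj I hI.1.1 I' hI'.1.1 hne
          rw [Set.eq_empty_iff_forall_notMem] at this
          exact this g ⟨hgI, hgI'⟩
        have hsum : Q₀.ncard + Q₁.ncard ≤ Q.ncard + 1 := by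
          have h1 : (Q₀ ∪ Q₁).ncard + (Q₀ ∩ Q₁).ncard = Q₀.ncard + Q₁.ncard :=
            Set.ncard_union_add_ncard_inter _ _ hQ₀fin hQ₁fin
          have h2 : (Q₀ ∪ Q₁).ncard ≤ Q.ncard :=
            Set.ncard_le_ncard (Set.union_subset hQ₀sub hQ₁sub) hfin
          omega
        calc (dynPartition F P (s + 1)).ncard
            ≤ (((fun I => F ⁻¹' I ∩ I₀) '' Q₀) ∪ ((fun I => F ⁻¹' I ∩ I₁) '' Q₁)).ncard :=
              Set.ncard_le_ncard hsub ((hQ₀fin.image _).union (hQ₁fin.image _))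
          _ ≤ ((fun I => F ⁻¹' I ∩ I₀) '' Q₀).ncard + ((fun I => F ⁻¹' I ∩ I₁) '' Q₁).ncard :=
              Set.ncard_union_le _ _
          _ ≤ Q₀.ncard + Q₁.ncard :=
              add_le_add (Set.ncard_image_le hQ₀fin) (Set.ncard_image_le hQ₁fin)
          _ ≤ Q.ncard + 1 := hsum
          _ ≤ (s + 1) + 2 := by omega
  intro t ht
  have := (key (t - 1)).2.2.2
  omega
end

section
/- Solving the recursions in the complexity bound: let d ≥ 1, c ≥ 1, and suppose nonnegative integer sequences n_U(t), indexed by subsets U ⊆ {1,…,d} and t ∈ ℕ, satisfy n_{{1,…,d}}(t) = 1 for all t, n_U(1) ≤ c·∏_{i∉U} m_i for constants m_i ≥ 1, and n_U(t+1) ≤ n_U(t) + c·Σ_{i∉U} m_i · n_{U∪{i}}(t). Then for every U with #({1,…,d} \ U) = k and every t ∈ ℕ, n_U(t) ≤ c^k · t^k · ∏_{i∉U} m_i. -/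
/-!
Induction on `k = #Uᶜ`, then on `t`. Each of the `k` sets `insert i U` obeys the bound with
exponent `k - 1`, so one step of the recursion adds at most `c^k k t^(k-1) ∏ m_i` to `n U t`;
this increment is absorbed because `t^k + k t^(k-1) ≤ (t+1)^k`, the discrete form of
`Σ_{s<τ} s^(k-1) ≤ τ^k / k`.
-/

open Finset

theorem pow_succ_add_mul_pow_le_add_one_pow {R : Type*} [CommSemiring R] [PartialOrder R]
    [IsOrderedRing R] {t : R} (ht : 0 ≤ t) (k : ℕ) :
    t ^ (k + 1) + (k + 1) * t ^ k ≤ (t + 1) ^ (k + 1) := by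
  induction k with
  | zero => simp
  | succ k ih =>
    have ht' : 0 ≤ t + 1 := add_nonneg ht zero_le_one
    calc t ^ (k + 2) + (↑(k + 1) + 1) * t ^ (k + 1)
        ≤ t ^ (k + 2) + (↑(k + 1) + 1) * t ^ (k + 1) + (k + 1) * t ^ k :=
          le_add_of_nonneg_right <|
            mul_nonneg (add_nonneg k.cast_nonneg zero_le_one) (pow_nonneg ht k)
      _ = (t + 1) * (t ^ (k + 1) + (k + 1) * t ^ k) := by push_cast; ring
      _ ≤ (t + 1) * (t + 1) ^ (k + 1) := by gcongr
      _ = (t + 1) ^ (k + 1 + 1) := by ring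

section Recursion

variable {ι : Type*} [DecidableEq ι]

theorem sum_mul_le_card_mul_prod {m f : ι → ℕ} {s : Finset ι} {B : ℕ}
    (h : ∀ i ∈ s, f i ≤ B * ∏ j ∈ s.erase i, m j) :
    ∑ i ∈ s, m i * f i ≤ #s * (B * ∏ i ∈ s, m i) := by
  calc ∑ i ∈ s, m i * f i
      ≤ ∑ i ∈ s, m i * (B * ∏ j ∈ s.erase i, m j) :=
        sum_le_sum fun i hi ↦ by gcongr; exact h i hi
    _ = ∑ _i ∈ s, B * ∏ i ∈ s, m i := sum_congr rfl fun i hi ↦ by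
          rw [← mul_prod_erase s m hi]; ring
    _ = #s * (B * ∏ i ∈ s, m i) := by rw [sum_const, smul_eq_mul]

theorem le_pow_mul_prod_of_recursion [Fintype ι] {c : ℕ} {m : ι → ℕ}
    {n : Finset ι → ℕ → ℕ}
    (hfull : ∀ t, n univ t = 1)
    (hbase : ∀ U, n U 1 ≤ c * ∏ i ∈ Uᶜ, m i)
    (hrec : ∀ U t, 1 ≤ t → n U (t + 1) ≤ n U t + c * ∑ i ∈ Uᶜ, m i * n (insert i U) t)
    (k : ℕ) :
    ∀ U : Finset ι, #Uᶜ = k → ∀ t, 1 ≤ t → n U t ≤ c ^ k * t ^ k * ∏ i ∈ Uᶜ, m i := by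
  induction k with
  | zero =>
    intro U hU t _
    obtain rfl : U = univ := (compl_eq_empty_iff U).mp (card_eq_zero.mp hU)
    simp [hfull]
  | succ k ih =>
    intro U hU t ht
    induction t, ht using Nat.le_induction with
    | base =>
      calc n U 1 ≤ c * ∏ i ∈ Uᶜ, m i := hbase U
        _ ≤ c ^ (k + 1) * 1 ^ (k + 1) * ∏ i ∈ Uᶜ, m i := by
          rw [one_pow, mul_one]; gcongr; exact Nat.le_self_pow k.succ_ne_zero c
    | succ t ht iht =>
      have hsum : ∑ i ∈ Uᶜ, m i * n (insert i U) t
          ≤ (k + 1) * (c ^ k * t ^ k * ∏ i ∈ Uᶜ, m i) := by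
        rw [← hU]
        refine sum_mul_le_card_mul_prod fun i hi ↦ ?_
        rw [← compl_insert]
        refine ih _ ?_ t ht
        rw [compl_insert, card_erase_of_mem hi, hU, Nat.add_sub_cancel]
      calc n U (t + 1) ≤ n U t + c * ∑ i ∈ Uᶜ, m i * n (insert i U) t := hrec U t ht
        _ ≤ c ^ (k + 1) * t ^ (k + 1) * ∏ i ∈ Uᶜ, m i
              + c * ((k + 1) * (c ^ k * t ^ k * ∏ i ∈ Uᶜ, m i)) := by gcongr
        _ = c ^ (k + 1) * (t ^ (k + 1) + (k + 1) * t ^ k) * ∏ i ∈ Uᶜ, m i := by ring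
        _ ≤ c ^ (k + 1) * (t + 1) ^ (k + 1) * ∏ i ∈ Uᶜ, m i := by
          gcongr; exact_mod_cast pow_succ_add_mul_pow_le_add_one_pow t.zero_le k

end Recursion

theorem stmt_12_general (d : ℕ) (c : ℕ)
    (m : Fin d → ℕ)
    (n : Finset (Fin d) → ℕ → ℕ)
    (hfull : ∀ t : ℕ, n Finset.univ t = 1)
    (hbase : ∀ U : Finset (Fin d), n U 1 ≤ c * ∏ i ∈ Uᶜ, m i)
    (hrec : ∀ (U : Finset (Fin d)) (t : ℕ), 1 ≤ t →
      n U (t + 1) ≤ n U t + c * ∑ i ∈ Uᶜ, m i * n (insert i U) t) :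
    ∀ (U : Finset (Fin d)) (t : ℕ), 1 ≤ t →
      n U t ≤ c ^ Uᶜ.card * t ^ Uᶜ.card * ∏ i ∈ Uᶜ, m i :=
  fun U t ht ↦ le_pow_mul_prod_of_recursion hfull hbase hrec _ U rfl t ht

/-- solving the chain of degeneracy recursions.  If
`n_{{1,…,d}}(t) = 1`, `n_U(1) ≤ c ∏_{i∉U} m_i`, and
`n_U(t+1) ≤ n_U(t) + c Σ_{i∉U} m_i n_{U∪{i}}(t)`, with `c, m_i ≥ 1`, then
`n_U(t) ≤ c^k t^k ∏_{i∉U} m_i` where `k = #({1,…,d} ∖ U)`. -/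
theorem stmt_12 (d : ℕ) (hd : 1 ≤ d) (c : ℕ) (hc : 1 ≤ c)
    (m : Fin d → ℕ) (hm : ∀ i, 1 ≤ m i)
    (n : Finset (Fin d) → ℕ → ℕ)
    (hfull : ∀ t : ℕ, n Finset.univ t = 1)
    (hbase : ∀ U : Finset (Fin d), n U 1 ≤ c * ∏ i ∈ Uᶜ, m i)
    (hrec : ∀ (U : Finset (Fin d)) (t : ℕ), 1 ≤ t →
      n U (t + 1) ≤ n U t + c * ∑ i ∈ Uᶜ, m i * n (insert i U) t) :
    ∀ (U : Finset (Fin d)) (t : ℕ), 1 ≤ t →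
      n U t ≤ c ^ Uᶜ.card * t ^ Uᶜ.card * ∏ i ∈ Uᶜ, m i :=
  stmt_12_general d c m n hfull hbase hrec
end

section
/- Negative 2-circuit linear complexity: consider the 2-dimensional regulatory network F(x_1, x_2) = (a x_1 + (1−a)H(T_{2,1} − x_2), a x_2 + (1−a)H(x_1 − T_{1,2})) with contraction rate a < 1/2 (so coordinatewise injectivity holds with K_{2,1} = K_{1,2} = 1). Then the complexity satisfies C(t) ≤ 2t + 2 for all t ∈ ℕ. -/
/-- The negative circuit on 2 vertices:
`F(x₁,x₂) = (a x₁ + (1−a)H(T₂₁ − x₂), a x₂ + (1−a)H(x₁ − T₁₂))`. -/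
noncomputable def negCircuit (a T12 T21 : ℝ) : ℝ × ℝ → ℝ × ℝ :=
  fun p => (a * p.1 + (1 - a) * heav (T21 - p.2),
            a * p.2 + (1 - a) * heav (p.1 - T12))

/-- Base partition of `[0,1]²` into the (at most 4) atoms on which both Heaviside
terms are constant. -/
noncomputable def negCircuitBaseP (T12 T21 : ℝ) : Set (Set (ℝ × ℝ)) :=
  {A | ∃ q ∈ Set.Icc ((0:ℝ), (0:ℝ)) (1, 1),
    A = {p ∈ Set.Icc ((0:ℝ), (0:ℝ)) (1, 1) |
      heav (T21 - p.2) = heav (T21 - q.2) ∧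
      heav (p.1 - T12) = heav (q.1 - T12)}}

/-! The complexity counts the itineraries, under `F`, of the two switches `(x₂ ≥ T₂₁, x₁ > T₁₂)`.
Each coordinate of `F` is an affine contraction of ratio `a` driven by the switch of the other
coordinate, so on an atom of level `m` a coordinate of `F^m` is `u ↦ a ^ m u + d` with `d` fixed by
the driving bits; for `a ≤ 1/2` distinct words give offsets at least `a ^ m` apart. Hence at most
one atom straddles each threshold at time `m`, and an atom of level `m ≥ 1` never straddles both,
since the symbol at time `m - 1` fixes one of the two switches at time `m`. Each refinement
therefore adds at most two atoms to the four base atoms. -/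

open Set Function

section Partition

variable {X β : Type*}

def fiberPartition (f : X → β) (S : Set X) : Set (Set X) :=
  (fun q => {p ∈ S | f p = f q}) '' S

theorem ncard_fiberPartition (f : X → β) (S : Set X) :
    (fiberPartition f S).ncard = (f '' S).ncard := by
  rw [fiberPartition, ← image_image (fun b => {p ∈ S | f p = b}) f]
  refine InjOn.ncard_image ?_
  rintro _ ⟨x, hx, rfl⟩ _ ⟨y, -, rfl⟩ h
  have hx' : x ∈ {p ∈ S | f p = f y} := by
    simp only at h
    exact h ▸ ⟨hx, rfl⟩
  exact hx'.2

def itinerary (F : X → X) (c : X → β) (n : ℕ) (p : X) : Fin n → β :=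
  fun k => c (F^[k] p)

theorem itinerary_succ (F : X → X) (c : X → β) (n : ℕ) (p : X) :
    itinerary F c (n + 1) p = Fin.snoc (itinerary F c n p) (c (F^[n] p)) := by
  ext k
  induction k using Fin.lastCases <;> simp [itinerary]

theorem itinerary_succ_eq_iff (F : X → X) (c : X → β) (n : ℕ) (x y : X) :
    itinerary F c (n + 1) x = itinerary F c (n + 1) y ↔
      c x = c y ∧ itinerary F c n (F x) = itinerary F c n (F y) := by
  have cons : ∀ p, itinerary F c (n + 1) p = Fin.cons (c p) (itinerary F c n (F p)) := by
    intro p; ext k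
    induction k using Fin.cases <;> simp [itinerary, iterate_succ_apply]
  rw [cons, cons, Fin.cons_inj]

theorem dynPartition_fiberPartition {F : X → X} {S : Set X} (hF : MapsTo F S S) (c : X → β) :
    ∀ t, dynPartition F (fiberPartition c S) t = fiberPartition (itinerary F c (t + 1)) S
  | 0 => by
    have h : ∀ x y, itinerary F c 1 x = itinerary F c 1 y ↔ c x = c y := by
      simp [funext_iff, itinerary]
    simp only [dynPartition, fiberPartition, h]
  | t + 1 => by
    have ih := dynPartition_fiberPartition hF c t
    have mem_iff : ∀ q r x, x ∈ F ⁻¹' {p ∈ S | itinerary F c (t + 1) p = itinerary F c (t + 1) q}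
        ∩ {p ∈ S | c p = c r} ↔ x ∈ S ∧ c x = c r ∧
          itinerary F c (t + 1) (F x) = itinerary F c (t + 1) q := by
      intro q r x
      simp only [mem_inter_iff, mem_preimage, mem_ofPred_eq]
      exact ⟨fun h => ⟨h.2.1, h.2.2, h.1.2⟩, fun h => ⟨⟨hF h.1, h.2.2⟩, h.1, h.2.1⟩⟩
    ext A
    simp only [dynPartition, ih]
    constructor
    · rintro ⟨_, ⟨q, -, rfl⟩, _, ⟨r, -, rfl⟩, rfl, hne⟩
      obtain ⟨p, hp⟩ := nonempty_iff_ne_empty.2 hne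
      rw [mem_iff] at hp
      refine ⟨p, hp.1, ?_⟩
      ext x
      rw [mem_iff, mem_ofPred_eq, itinerary_succ_eq_iff, hp.2.1, hp.2.2]
    · rintro ⟨q, hq, rfl⟩
      refine ⟨_, ⟨F q, hF hq, rfl⟩, _, ⟨q, hq, rfl⟩, ?_, nonempty_iff_ne_empty.1 ⟨q, hq, rfl⟩⟩
      ext x
      rw [mem_iff, mem_ofPred_eq, itinerary_succ_eq_iff]

end Partition

section Splitting

variable {X α β : Type*}

def splitting (g : X → α) (h : X → β) (S : Set X) : Set α :=
  {a | ∃ x ∈ S, ∃ y ∈ S, g x = a ∧ g y = a ∧ h x ≠ h y}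

theorem exists_of_mem_splitting_decide {g : X → α} {Q : X → Prop} [DecidablePred Q] {S : Set X}
    {a : α} (ha : a ∈ splitting g (fun x => decide (Q x)) S) :
    ∃ x ∈ S, ∃ y ∈ S, g x = a ∧ g y = a ∧ ¬Q x ∧ Q y := by
  obtain ⟨x, hx, y, hy, rfl, hyx, hne⟩ := ha
  by_cases hQ : Q x
  · exact ⟨y, hy, x, hx, hyx, rfl, fun hQy => hne (by simp only [hQ, hQy]), hQ⟩
  · exact ⟨x, hx, y, hy, rfl, hyx, hQ, by_contra fun hQy => hne (by simp only [hQ, hQy])⟩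

theorem ncard_image_prod_bool_le [Finite α] (g : X → α) (h : X → Bool) (S : Set X) :
    ((fun x => (g x, h x)) '' S).ncard ≤ (g '' S).ncard + (splitting g h S).ncard := by
  set A : Bool → Set α := fun b => g '' {x ∈ S | h x = b}
  have hsub : (fun x => (g x, h x)) '' S ⊆ (·, false) '' A false ∪ (·, true) '' A true := by
    rintro _ ⟨x, hx, rfl⟩
    cases hb : h x
    · exact Or.inl ⟨g x, ⟨x, ⟨hx, hb⟩, rfl⟩, by simp [hb]⟩
    · exact Or.inr ⟨g x, ⟨x, ⟨hx, hb⟩, rfl⟩, by simp [hb]⟩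
  have hunion : A false ∪ A true = g '' S := by
    ext a
    simp only [A, mem_union, mem_image, mem_ofPred_eq]
    constructor
    · rintro (⟨x, ⟨hx, -⟩, rfl⟩ | ⟨x, ⟨hx, -⟩, rfl⟩) <;> exact ⟨x, hx, rfl⟩
    · rintro ⟨x, hx, rfl⟩
      cases hb : h x
      exacts [Or.inl ⟨x, ⟨hx, hb⟩, rfl⟩, Or.inr ⟨x, ⟨hx, hb⟩, rfl⟩]
  have hinter : A false ∩ A true ⊆ splitting g h S := by
    rintro a ⟨⟨x, ⟨hx, hxb⟩, rfl⟩, ⟨y, ⟨hy, hyb⟩, hyx⟩⟩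
    exact ⟨x, hx, y, hy, rfl, hyx, by simp [hxb, hyb]⟩
  calc ((fun x => (g x, h x)) '' S).ncard
      ≤ ((·, false) '' A false).ncard + ((·, true) '' A true).ncard :=
        (ncard_le_ncard hsub).trans (ncard_union_le _ _)
    _ ≤ (A false).ncard + (A true).ncard := add_le_add ncard_image_le ncard_image_le
    _ = (A false ∪ A true).ncard + (A false ∩ A true).ncard :=
        (ncard_union_add_ncard_inter _ _).symm
    _ ≤ (g '' S).ncard + (splitting g h S).ncard := by
        rw [hunion]; exact Nat.add_le_add_left (ncard_le_ncard hinter) _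

theorem ncard_image_prod_bool_bool_le [Finite α] (g : X → α) (h₁ h₂ : X → Bool) (S : Set X)
    (hs₁ : (splitting g h₁ S).Subsingleton) (hs₂ : (splitting g h₂ S).Subsingleton)
    (hdisj : Disjoint (splitting g h₁ S) (splitting g h₂ S)) :
    ((fun x => (g x, h₁ x, h₂ x)) '' S).ncard ≤ (g '' S).ncard + 2 := by
  have hs : (splitting (fun x => (g x, h₁ x)) h₂ S).Subsingleton := by
    rintro _ ⟨x, hx, y, hy, rfl, hyx, hxy⟩ _ ⟨x', hx', y', hy', rfl, hyx', hxy'⟩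
    have hgy := congrArg Prod.fst hyx
    have hgy' := congrArg Prod.fst hyx'
    have hg : g x = g x' := hs₂ ⟨x, hx, y, hy, rfl, hgy, hxy⟩ ⟨x', hx', y', hy', rfl, hgy', hxy'⟩
    have hh : h₁ x = h₁ x' := by
      by_contra hne
      exact disjoint_left.1 hdisj ⟨x, hx, x', hx', rfl, hg.symm, hne⟩
        ⟨x, hx, y, hy, rfl, hgy, hxy⟩
    simp only [hg, hh]
  calc ((fun x => (g x, h₁ x, h₂ x)) '' S).ncard
      = ((fun x => ((g x, h₁ x), h₂ x)) '' S).ncard := by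
        rw [← ncard_image_of_injective _ (Equiv.prodAssoc α Bool Bool).injective, image_image]; rfl
    _ ≤ ((fun x => (g x, h₁ x)) '' S).ncard + 1 :=
        (ncard_image_prod_bool_le _ h₂ S).trans
          (Nat.add_le_add_left (ncard_le_one_iff_subsingleton.2 hs) _)
    _ ≤ (g '' S).ncard + 2 := by
        have := (ncard_image_prod_bool_le g h₁ S).trans
          (Nat.add_le_add_left (ncard_le_one_iff_subsingleton.2 hs₁) _)
        omega

theorem disjoint_splitting {F : X → X} {c : X → Bool × Bool} {S : Set X}
    (hF : MapsTo F S S)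
    (hc : ∀ p ∈ S, ((c p).1 = (c p).2 → (c (F p)).1 = (c p).1) ∧
      ((c p).1 ≠ (c p).2 → (c (F p)).2 = (c p).2))
    {m : ℕ} (hm : 1 ≤ m) :
    Disjoint (splitting (itinerary F c m) (fun p => (c (F^[m] p)).1) S)
      (splitting (itinerary F c m) (fun p => (c (F^[m] p)).2) S) := by
  obtain ⟨k, rfl⟩ : ∃ k, m = k + 1 := ⟨m - 1, by omega⟩
  rw [disjoint_left]
  rintro _ ⟨x, hx, y, hy, rfl, hyx, hne⟩ ⟨x', hx', y', hy', hx'x, hy'x, hne'⟩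
  have hlast : ∀ z, itinerary F c (k + 1) z = itinerary F c (k + 1) x → c (F^[k] z) = c (F^[k] x) :=
    fun z h => congrFun h (Fin.last k)
  by_cases hcx : (c (F^[k] x)).1 = (c (F^[k] x)).2
  · have hconst : ∀ z ∈ S, itinerary F c (k + 1) z = itinerary F c (k + 1) x →
        (c (F^[k + 1] z)).1 = (c (F^[k] x)).1 := fun z hz h => by
      rw [iterate_succ_apply', (hc _ (hF.iterate k hz)).1 (hlast z h ▸ hcx), hlast z h]
    exact hne ((hconst x hx rfl).trans (hconst y hy hyx).symm)
  · have hconst : ∀ z ∈ S, itinerary F c (k + 1) z = itinerary F c (k + 1) x →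
        (c (F^[k + 1] z)).2 = (c (F^[k] x)).2 := fun z hz h => by
      rw [iterate_succ_apply', (hc _ (hF.iterate k hz)).2 (hlast z h ▸ hcx), hlast z h]
    exact hne' ((hconst x' hx' hx'x).trans (hconst y' hy' hy'x).symm)

end Splitting

section Contraction

variable {a : ℝ}

def drift (a : ℝ) (σ : ℕ → Bool) : ℕ → ℝ
  | 0 => 0
  | n + 1 => a * drift a σ n + (1 - a) * (if σ n then 1 else 0)

theorem drift_congr {σ σ' : ℕ → Bool} {n : ℕ} (h : ∀ k < n, σ k = σ' k) :
    drift a σ n = drift a σ' n := by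
  induction n with
  | zero => rfl
  | succ n ih => simp only [drift, ih fun k hk => h k (hk.trans n.lt_succ_self), h n n.lt_succ_self]

theorem drift_mem_Icc (ha0 : 0 ≤ a) (ha1 : a ≤ 1) (σ : ℕ → Bool) (n : ℕ) :
    drift a σ n ∈ Icc 0 (1 - a ^ n) := by
  induction n with
  | zero => simp [drift]
  | succ n ih =>
    obtain ⟨h0, h1⟩ := ih
    have hb : (0 : ℝ) ≤ (if σ n then 1 else 0) ∧ (if σ n then 1 else 0 : ℝ) ≤ 1 := by
      split_ifs <;> norm_num
    simp only [drift, pow_succ, mem_Icc]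
    constructor <;> nlinarith

theorem pow_le_abs_drift_sub (ha0 : 0 ≤ a) (ha : a ≤ 1 / 2) {σ σ' : ℕ → Bool} :
    ∀ {n : ℕ}, (∃ k < n, σ k ≠ σ' k) → a ^ n ≤ |drift a σ n - drift a σ' n|
  | 0, ⟨_, hk, _⟩ => absurd hk (Nat.not_lt_zero _)
  | n + 1, ⟨k, hk, hne⟩ => by
    by_cases hn : σ n = σ' n
    · have hkn : k < n := lt_of_le_of_ne (Nat.lt_succ_iff.1 hk) fun h => hne (h ▸ hn)
      have ih := pow_le_abs_drift_sub ha0 ha ⟨k, hkn, hne⟩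
      have hsub : drift a σ (n + 1) - drift a σ' (n + 1) = a * (drift a σ n - drift a σ' n) := by
        simp only [drift, hn]; ring
      rw [hsub, abs_mul, abs_of_nonneg ha0, pow_succ']
      exact mul_le_mul_of_nonneg_left ih ha0
    · -- the fresh terms differ by `1 - a`, which beats the spread `a (1 - a ^ n)` of the rest
      have hgap : a ^ (n + 1) ≤ 1 - a - a * (1 - a ^ n) := by rw [pow_succ]; nlinarith
      obtain ⟨h0, h1⟩ := drift_mem_Icc ha0 (by linarith) σ n
      obtain ⟨h0', h1'⟩ := drift_mem_Icc ha0 (by linarith) σ' n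
      have := mul_nonneg ha0 h0
      have := mul_nonneg ha0 h0'
      have := mul_le_mul_of_nonneg_left h1 ha0
      have := mul_le_mul_of_nonneg_left h1' ha0
      rw [le_abs]
      cases hσ : σ n <;> cases hσ' : σ' n <;> simp only [hσ, hσ', not_true_eq_false] at hn
      · right; simp only [drift, hσ, hσ', Bool.false_eq_true, ↓reduceIte]; linarith
      · left; simp only [drift, hσ, hσ', Bool.false_eq_true, ↓reduceIte]; linarith

variable {X : Type*} (F : X → X) (π : X → ℝ) (β : X → Bool) (P : ℝ → Prop)

theorem iterate_eq_drift (hπ : ∀ p, π (F p) = a * π p + (1 - a) * (if β p then 1 else 0))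
    (p : X) : ∀ n, π (F^[n] p) = a ^ n * π p + drift a (fun k => β (F^[k] p)) n
  | 0 => by simp [drift]
  | n + 1 => by
    rw [iterate_succ_apply', hπ, iterate_eq_drift hπ p n]
    simp only [drift, pow_succ]
    ring

theorem iterate_sub_iterate (hπ : ∀ p, π (F p) = a * π p + (1 - a) * (if β p then 1 else 0))
    {z z' : X} {n : ℕ} (h : ∀ k < n, β (F^[k] z) = β (F^[k] z')) :
    π (F^[n] z) - π (F^[n] z') = a ^ n * (π z - π z') := by
  rw [iterate_eq_drift F π β hπ, iterate_eq_drift F π β hπ, drift_congr h]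
  ring

def BitsAgree (m : ℕ) (x y : X) : Prop :=
  ∀ k < m, β (F^[k] x) = β (F^[k] y) ∧ (P (π (F^[k] x)) ↔ P (π (F^[k] y)))

theorem imp_of_straddle (hπ : ∀ p, π (F p) = a * π p + (1 - a) * (if β p then 1 else 0))
    (ha0 : 0 ≤ a) (hP : Monotone P) {z z' : X} {m k : ℕ} (hk : k ≤ m)
    (hβ : ∀ j < m, β (F^[j] z) = β (F^[j] z'))
    (hz : ¬P (π (F^[m] z))) (hz' : P (π (F^[m] z'))) :
    P (π (F^[k] z)) → P (π (F^[k] z')) := by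
  have hm : 0 < a ^ m * (π z' - π z) := by
    rw [← iterate_sub_iterate F π β hπ fun j hj => (hβ j hj).symm, sub_pos]
    exact lt_of_not_ge fun h => hz (hP h hz')
  have hzz : 0 ≤ π z' - π z := (pos_of_mul_pos_right hm (pow_nonneg ha0 m)).le
  have hk' := iterate_sub_iterate F π β hπ (n := k) fun j hj => (hβ j (hj.trans_le hk)).symm
  exact hP (sub_nonneg.1 (hk' ▸ mul_nonneg (pow_nonneg ha0 k) hzz))

/-- On a `BitsAgree`-class, `π ∘ F^[m]` is `u ↦ a ^ m u + d` with `d` fixed by the `β`-bits, and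
offsets of distinct words are at least `a ^ m` apart; so two classes straddling the threshold of
`P` have the same `β`-bits, and then `π`-order of initial points fixes the `P`-bits. -/
theorem BitsAgree.of_straddle
    (hπ : ∀ p, π (F p) = a * π p + (1 - a) * (if β p then 1 else 0))
    (ha0 : 0 ≤ a) (ha : a ≤ 1 / 2) (hP : Monotone P) {m : ℕ} {x y x' y' : X}
    (hxy : BitsAgree F π β P m x y) (hxy' : BitsAgree F π β P m x' y')
    (hx : π x ∈ Icc 0 1) (hy : π y ∈ Icc 0 1) (hx' : π x' ∈ Icc 0 1) (hy' : π y' ∈ Icc 0 1)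
    (hxP : ¬P (π (F^[m] x))) (hyP : P (π (F^[m] y)))
    (hxP' : ¬P (π (F^[m] x'))) (hyP' : P (π (F^[m] y'))) :
    BitsAgree F π β P m x x' := by
  have lt_of_straddle : ∀ {u v}, ¬P u → P v → u < v := fun hu hv =>
    lt_of_not_ge fun h => hu (hP h hv)
  have hβ : ∀ k < m, β (F^[k] x) = β (F^[k] x') := by
    by_contra! hne
    have hsep := pow_le_abs_drift_sub ha0 ha hne
    have hdy := drift_congr (a := a) fun k hk => (hxy k hk).1
    have hdy' := drift_congr (a := a) fun k hk => (hxy' k hk).1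
    have ex := iterate_eq_drift F π β hπ x m
    have ey := iterate_eq_drift F π β hπ y m
    have ex' := iterate_eq_drift F π β hπ x' m
    have ey' := iterate_eq_drift F π β hπ y' m
    have h1 := lt_of_straddle hxP' hyP
    have h2 := lt_of_straddle hxP hyP'
    have ham := pow_nonneg ha0 m
    have := mul_nonneg ham hx.1
    have := mul_nonneg ham hx'.1
    have := mul_le_of_le_one_right ham hy.2
    have := mul_le_of_le_one_right ham hy'.2
    rw [le_abs] at hsep
    rcases hsep with hsep | hsep <;> linarith
  refine fun k hk => ⟨hβ k hk, ⟨fun h => ?_, fun h => ?_⟩⟩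
  · refine ((hxy' k hk).2).2 (imp_of_straddle F π β P hπ ha0 hP hk.le (fun j hj => ?_) hxP hyP' h)
    rw [hβ j hj, (hxy' j hj).1]
  · refine ((hxy k hk).2).2 (imp_of_straddle F π β P hπ ha0 hP hk.le (fun j hj => ?_) hxP' hyP h)
    rw [← hβ j hj, (hxy j hj).1]

end Contraction

theorem subsingleton_splitting_of_bitsAgree {X α : Type*} {a : ℝ} {F : X → X} {π : X → ℝ}
    {β : X → Bool} {P : ℝ → Prop} [DecidablePred P]
    (hπ : ∀ p, π (F p) = a * π p + (1 - a) * (if β p then 1 else 0))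
    (ha0 : 0 ≤ a) (ha : a ≤ 1 / 2) (hP : Monotone P) {m : ℕ} {g : X → α} {S : Set X}
    (hg : ∀ x y, g x = g y ↔ BitsAgree F π β P m x y) (hS : ∀ z ∈ S, π z ∈ Icc 0 1) :
    (splitting g (fun x => decide (P (π (F^[m] x)))) S).Subsingleton := by
  intro _ h _ h'
  obtain ⟨x, hx, y, hy, rfl, hyx, hxP, hyP⟩ := exists_of_mem_splitting_decide h
  obtain ⟨x', hx', y', hy', rfl, hyx', hxP', hyP'⟩ := exists_of_mem_splitting_decide h'
  exact (hg x x').2 <| BitsAgree.of_straddle F π β P hπ ha0 ha hP ((hg x y).1 hyx.symm)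
    ((hg x' y').1 hyx'.symm) (hS x hx) (hS y hy) (hS x' hx') (hS y' hy') hxP hyP hxP' hyP'

section NegCircuit

variable {a T12 T21 : ℝ}

abbrev unitSquare : Set (ℝ × ℝ) := Icc ((0 : ℝ), (0 : ℝ)) (1, 1)

theorem mem_unitSquare {p : ℝ × ℝ} : p ∈ unitSquare ↔ p.1 ∈ Icc 0 1 ∧ p.2 ∈ Icc 0 1 := by
  simp only [mem_Icc, Prod.le_def]
  tauto

/-- `(x₂ ≥ T₂₁, x₁ > T₁₂)`: both switches as up-sets, so the first one is the negation of
`heav (T₂₁ - x₂) = 1`. -/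
noncomputable def negCircuitCode (T12 T21 : ℝ) (p : ℝ × ℝ) : Bool × Bool :=
  (decide (T21 ≤ p.2), decide (T12 < p.1))

theorem heav_eq_heav_iff {u v : ℝ} : heav u = heav v ↔ (u ≤ 0 ↔ v ≤ 0) := by
  unfold heav
  by_cases hu : u ≤ 0 <;> by_cases hv : v ≤ 0 <;> simp [hu, hv]

theorem negCircuitBaseP_eq (T12 T21 : ℝ) :
    negCircuitBaseP T12 T21 = fiberPartition (negCircuitCode T12 T21) unitSquare := by
  have key : ∀ p q : ℝ × ℝ, (heav (T21 - p.2) = heav (T21 - q.2) ∧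
      heav (p.1 - T12) = heav (q.1 - T12)) ↔
        negCircuitCode T12 T21 p = negCircuitCode T12 T21 q := by
    intro p q
    simp only [heav_eq_heav_iff, negCircuitCode, Prod.mk.injEq, decide_eq_decide, ← not_lt,
      not_iff_not, sub_pos]
  ext A
  simp only [negCircuitBaseP, fiberPartition, key, mem_image, mem_ofPred_eq, eq_comm]

theorem negCircuit_fst (p : ℝ × ℝ) :
    (negCircuit a T12 T21 p).1 = a * p.1 + (1 - a) * (if decide (p.2 < T21) then 1 else 0) := by
  simp only [negCircuit, heav, sub_nonpos, decide_eq_true_eq, ← not_le]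
  split_ifs <;> rfl

theorem negCircuit_snd (p : ℝ × ℝ) :
    (negCircuit a T12 T21 p).2 = a * p.2 + (1 - a) * (if decide (T12 < p.1) then 1 else 0) := by
  simp only [negCircuit, heav, sub_nonpos, decide_eq_true_eq, ← not_le]
  split_ifs <;> rfl

theorem mapsTo_negCircuit (ha0 : 0 ≤ a) (ha1 : a ≤ 1) :
    MapsTo (negCircuit a T12 T21) unitSquare unitSquare := by
  intro p hp
  rw [mem_unitSquare] at hp ⊢
  obtain ⟨⟨h1, h1'⟩, h2, h2'⟩ := hp
  rw [negCircuit_fst, negCircuit_snd]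
  refine ⟨⟨?_, ?_⟩, ?_, ?_⟩ <;> split_ifs <;> nlinarith

/-- The image of an atom of level `≥ 1` cannot contain the double discontinuity point
`(T₁₂, T₂₁)`: depending on the quadrant the point came from, one of the two switches is kept. -/
theorem negCircuitCode_fst_apply (ha1 : a ≤ 1) {p : ℝ × ℝ} (hp : p ∈ unitSquare)
    (h : (negCircuitCode T12 T21 p).1 = (negCircuitCode T12 T21 p).2) :
    (negCircuitCode T12 T21 (negCircuit a T12 T21 p)).1 = (negCircuitCode T12 T21 p).1 := by
  obtain ⟨-, h2, h2'⟩ := mem_unitSquare.1 hp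
  simp only [negCircuitCode, decide_eq_decide] at h ⊢
  rw [negCircuit_snd]
  by_cases hT : T21 ≤ p.2
  · simp only [h.1 hT, decide_true, if_true]
    exact iff_of_true (by nlinarith) hT
  · simp only [mt h.2 hT, decide_false, Bool.false_eq_true, if_false]
    exact iff_of_false (by nlinarith) hT

theorem negCircuitCode_snd_apply (ha1 : a ≤ 1) {p : ℝ × ℝ} (hp : p ∈ unitSquare)
    (h : (negCircuitCode T12 T21 p).1 ≠ (negCircuitCode T12 T21 p).2) :
    (negCircuitCode T12 T21 (negCircuit a T12 T21 p)).2 = (negCircuitCode T12 T21 p).2 := by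
  obtain ⟨⟨h1, h1'⟩, -⟩ := mem_unitSquare.1 hp
  simp only [negCircuitCode, ne_eq, decide_eq_decide] at h ⊢
  rw [negCircuit_fst]
  by_cases hT : T12 < p.1
  · simp only [show p.2 < T21 from not_le.1 fun h' => h (iff_of_true h' hT), decide_true, if_true]
    exact iff_of_true (by nlinarith) hT
  · simp only [show ¬p.2 < T21 from fun h' => h (iff_of_false (not_le.2 h') hT), decide_false,
      Bool.false_eq_true, if_false]
    exact iff_of_false (by nlinarith) hT

theorem itinerary_eq_iff_bitsAgree_fst {m : ℕ} {x y : ℝ × ℝ} :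
    itinerary (negCircuit a T12 T21) (negCircuitCode T12 T21) m x =
        itinerary (negCircuit a T12 T21) (negCircuitCode T12 T21) m y ↔
      BitsAgree (negCircuit a T12 T21) Prod.fst (fun p => decide (p.2 < T21)) (T12 < ·) m x y := by
  simp only [itinerary, funext_iff, Fin.forall_iff, BitsAgree, negCircuitCode, Prod.mk.injEq,
    decide_eq_decide, ← not_lt, not_iff_not]

theorem itinerary_eq_iff_bitsAgree_snd {m : ℕ} {x y : ℝ × ℝ} :
    itinerary (negCircuit a T12 T21) (negCircuitCode T12 T21) m x =
        itinerary (negCircuit a T12 T21) (negCircuitCode T12 T21) m y ↔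
      BitsAgree (negCircuit a T12 T21) Prod.snd (fun p => decide (T12 < p.1)) (T21 ≤ ·) m x y := by
  simp only [itinerary, funext_iff, Fin.forall_iff, BitsAgree, negCircuitCode, Prod.mk.injEq,
    decide_eq_decide, and_comm]

theorem ncard_itinerary_succ_le (ha0 : 0 ≤ a) (ha : a ≤ 1 / 2) {m : ℕ} (hm : 1 ≤ m) :
    (itinerary (negCircuit a T12 T21) (negCircuitCode T12 T21) (m + 1) '' unitSquare).ncard ≤
      (itinerary (negCircuit a T12 T21) (negCircuitCode T12 T21) m '' unitSquare).ncard + 2 := by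
  set F := negCircuit a T12 T21
  set c := negCircuitCode T12 T21
  have ha1 : a ≤ 1 := by linarith
  have himage : itinerary F c (m + 1) '' unitSquare =
      (fun w : (Fin m → Bool × Bool) × Bool × Bool =>
        (Fin.snoc w.1 w.2 : Fin (m + 1) → Bool × Bool)) ''
        ((fun p => (itinerary F c m p, (c (F^[m] p)).1, (c (F^[m] p)).2)) '' unitSquare) := by
    rw [image_image]
    simp only [itinerary_succ]
  have hinj : Injective fun w : (Fin m → Bool × Bool) × Bool × Bool =>
      (Fin.snoc w.1 w.2 : Fin (m + 1) → Bool × Bool) :=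
    fun w w' h => Prod.ext_iff.2 (Fin.snoc_inj.1 h)
  rw [himage, ncard_image_of_injective _ hinj]
  refine ncard_image_prod_bool_bool_le _ _ _ _ ?_ ?_ <|
    disjoint_splitting (c := negCircuitCode T12 T21) (mapsTo_negCircuit ha0 ha1)
      (fun p hp => ⟨negCircuitCode_fst_apply ha1 hp, negCircuitCode_snd_apply ha1 hp⟩) hm
  · exact subsingleton_splitting_of_bitsAgree (P := (T21 ≤ ·)) negCircuit_snd ha0 ha
      (fun _ _ h h' => h'.trans h) (fun _ _ => itinerary_eq_iff_bitsAgree_snd)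
      fun z hz => (mem_unitSquare.1 hz).2
  · exact subsingleton_splitting_of_bitsAgree (P := (T12 < ·)) negCircuit_fst ha0 ha
      (fun _ _ h h' => h'.trans_le h) (fun _ _ => itinerary_eq_iff_bitsAgree_fst)
      fun z hz => (mem_unitSquare.1 hz).1

theorem ncard_itinerary_le (ha0 : 0 ≤ a) (ha : a ≤ 1 / 2) :
    ∀ n, (itinerary (negCircuit a T12 T21) (negCircuitCode T12 T21) (n + 1) '' unitSquare).ncard
      ≤ 2 * (n + 1) + 2
  | 0 => (ncard_le_card _).trans (by simp)
  | n + 1 => by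
    have := ncard_itinerary_le ha0 ha n
    have := ncard_itinerary_succ_le (T12 := T12) (T21 := T21) ha0 ha (m := n + 1) (by omega)
    omega

end NegCircuit

theorem stmt_19_general (a T12 T21 : ℝ) (ha0 : 0 ≤ a) (ha : a < 1 / 2) :
    ∀ t : ℕ, 1 ≤ t →
      (dynPartition (negCircuit a T12 T21) (negCircuitBaseP T12 T21)
        (t - 1)).ncard ≤ 2 * t + 2 := by
  intro t ht
  obtain ⟨n, rfl⟩ : ∃ n, t = n + 1 := ⟨t - 1, by omega⟩
  rw [Nat.add_sub_cancel, negCircuitBaseP_eq,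
    dynPartition_fiberPartition (mapsTo_negCircuit ha0 (by linarith)), ncard_fiberPartition]
  exact ncard_itinerary_le ha0 ha.le n

/-- for the negative 2-circuit with contraction rate `a < 1/2`
(so coordinatewise injectivity holds), the complexity satisfies `C(t) ≤ 2t + 2`
for all `t ≥ 1`. -/
theorem stmt_19 (a T12 T21 : ℝ) (ha0 : 0 ≤ a) (ha : a < 1 / 2)
    (hT12 : T12 ∈ Set.Icc (0:ℝ) 1) (hT21 : T21 ∈ Set.Icc (0:ℝ) 1) :
    ∀ t : ℕ, 1 ≤ t →
      (dynPartition (negCircuit a T12 T21) (negCircuitBaseP T12 T21)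
        (t - 1)).ncard ≤ 2 * t + 2 :=
  stmt_19_general a T12 T21 ha0 ha
end
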